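/- Suboptimal-extension bound on signatures: let P be a player, t a well-formed tree won by P, i' the minimal P-losing number, ℓ a P-losing number, and (θ_{i'}, θ_{i'+2}, ..., θ_ℓ) a tuple of ordinals. Suppose Σ is a partial strategy of P in G(t) (a P-deterministic behaviour) such that: (a) Σ never reaches a node labelled p_j with j ≤ ℓ, nor a node labelled ~; (b) every infinite play of Σ is winning for P; (c) every position u not reachable by Σ satisfies σ_P(t↾u)↾ℓ ≤_lex (θ_{i'},...,θ_ℓ). Then σ_P(t)↾ℓ ≤_lex (θ_{i'},...,θ_ℓ). -/

import Mathlib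

namespace UnambSig

/-- The symbols of the alphabet `A^~_{i,k}`: unary priority symbols `p j`,
binary choice symbols of the two players (`true` is player 1), and the unary
player-swapping symbol `~`. -/
inductive Sym where
  | pri : ℕ → Sym
  | choice : Bool → Sym
  | neg : Sym
deriving DecidableEq

/-- Arity of a symbol. -/
def Sym.arity : Sym → ℕ
  | .pri _ => 1
  | .choice _ => 2
  | .neg => 1

/-- A labelling of potential tree nodes (lists of directions, from the root). -/
abbrev Label := List ℕ → Option Sym

/-- `t` is a tree over the alphabet `A^~_{i,k}`: the root is defined, children
match arities, the domain is closed and priorities are within `{i,…,k}`. -/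
def IsTree (t : Label) (i k : ℕ) : Prop :=
  t [] ≠ none ∧
  (∀ u s, t u = some s → ∀ d : ℕ, (t (u ++ [d]) ≠ none ↔ d < s.arity)) ∧
  (∀ u (d : ℕ), t u = none → t (u ++ [d]) = none) ∧
  (∀ u j, t u = some (Sym.pri j) → i ≤ j ∧ j ≤ k)

/-- The number of strict ancestors of `u` labelled by `~`. -/
def tildeCount (t : Label) (u : List ℕ) : ℕ :=
  (List.range u.length).countP (fun m => decide (t (u.take m) = some Sym.neg))

/-- A node is kept if it has an even number of `~`-labelled strict ancestors. -/
def kept (t : Label) (u : List ℕ) : Prop := tildeCount t u % 2 = 0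

instance (t : Label) (u : List ℕ) : Decidable (kept t u) := by
  unfold kept; infer_instance

/-- The node of a branch `α` at depth `n`. -/
def pref (α : ℕ → ℕ) (n : ℕ) : List ℕ := (List.range n).map α

/-- `α` is an infinite branch of `t`. -/
def IsBranch (t : Label) (α : ℕ → ℕ) : Prop := ∀ n, t (pref α n) ≠ none

/-- `t` is well-formed: no branch contains infinitely many `~`. -/
def WellFormed (t : Label) : Prop :=
  ∀ α : ℕ → ℕ, IsBranch t α → {n : ℕ | t (pref α n) = some Sym.neg}.Finite

/-- `t` is a well-formed tree over `A^~_{i,k}`. -/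
def GoodTree (t : Label) (i k : ℕ) : Prop := IsTree t i k ∧ WellFormed t

/-- The effective priority of a node: the labelled priority, shifted by one at
switched nodes (each `~` swaps the players). -/
def effPri (t : Label) (u : List ℕ) : Option ℕ :=
  match t u with
  | some (Sym.pri j) => some (if kept t u then j else j + 1)
  | _ => none

/-- The player controlling a node: the player named by the choice symbol,
swapped if the node is switched. -/
def ctrl (t : Label) (u : List ℕ) : Option Bool :=
  match t u with
  | some (Sym.choice Q) => some (if kept t u then Q else !Q)
  | _ => none

/-- The effective priority `j` appears infinitely often on the branch `α`. -/
def InfOften (t : Label) (α : ℕ → ℕ) (j : ℕ) : Prop :=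
  {n : ℕ | effPri t (pref α n) = some j}.Infinite

/-- The branch `α` is winning for player `P` in the game `G(t)`: the least
effective priority occurring infinitely often has the parity favourable to `P`
(even for player 1 = `true`). -/
def WinsBranch (t : Label) (P : Bool) (α : ℕ → ℕ) : Prop :=
  ∃ j, InfOften t α j ∧ (∀ j' < j, ¬ InfOften t α j') ∧ (Even j ↔ P = true)

/-- A strategy of player `P` in `G(t)`, identified (since the arena is a tree)
with a prefix-closed set of nodes: deterministic at `P`'s positions and full at
the other positions. -/
def IsStrategy (t : Label) (P : Bool) (S : List ℕ → Prop) : Prop :=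
  S [] ∧
  (∀ u, S u → t u ≠ none) ∧
  (∀ u (d : ℕ), S (u ++ [d]) → S u) ∧
  (∀ u, S u → ctrl t u = some P → ∃! d : ℕ, S (u ++ [d])) ∧
  (∀ u (d : ℕ), S u → ctrl t u ≠ some P → t (u ++ [d]) ≠ none → S (u ++ [d]))

/-- An infinite play of `S`: a branch all of whose prefixes belong to `S`. -/
def IsPlayOf (S : List ℕ → Prop) (α : ℕ → ℕ) : Prop := ∀ n, S (pref α n)

/-- A winning strategy of `P`: all its infinite plays are winning for `P`. -/
def IsWinningStrategy (t : Label) (P : Bool) (S : List ℕ → Prop) : Prop :=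
  IsStrategy t P S ∧ ∀ α, IsPlayOf S α → WinsBranch t P α

/-- `j` is a `P`-losing priority: within `{i,…,k}` and of the parity
unfavourable to `P` (odd for player 1 = `true`). -/
def PLosing (i k : ℕ) (P : Bool) (j : ℕ) : Prop :=
  i ≤ j ∧ j ≤ k ∧ (Odd j ↔ P = true)

/-- `j` is a `P`-winning priority. -/
def PWinning (i k : ℕ) (P : Bool) (j : ℕ) : Prop :=
  i ≤ j ∧ j ≤ k ∧ ¬ (Odd j ↔ P = true)

/-- A position `u` of the strategy `S` is active: it carries a `P`-losing
priority `j` and no strict ancestor is labelled `~` or by a smaller priority. -/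
def Active (t : Label) (i k : ℕ) (P : Bool) (S : List ℕ → Prop) (u : List ℕ) : Prop :=
  S u ∧ ∃ j, t u = some (Sym.pri j) ∧ PLosing i k P j ∧
    ∀ w, w <+: u → w ≠ u →
      (t w ≠ some Sym.neg ∧ ∀ j', t w = some (Sym.pri j') → j ≤ j')

/-- `w` is a `⪯`-minimal active position above `u` (an element of `suk_u(Σ)`). -/
def Suk (t : Label) (i k : ℕ) (P : Bool) (S : List ℕ → Prop) (u w : List ℕ) : Prop :=
  Active t i k P S w ∧ u <+: w ∧
    ∀ w', Active t i k P S w' → u <+: w' → w' <+: w → w' = w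

/-- The relation `u ≫ w` associated with the strategy `S`. -/
def Gg (t : Label) (i k : ℕ) (P : Bool) (S : List ℕ → Prop) (u w : List ℕ) : Prop :=
  S u ∧ S w ∧ u <+: w ∧ u ≠ w ∧
    ∃ w', Active t i k P S w' ∧ u <+: w' ∧ w' <+: w

/-- Lexicographic strict order on `P`-signatures (tuples of ordinals indexed by
the `P`-losing priorities; smaller indices are more significant). -/
def sigLt (i k : ℕ) (P : Bool) (σ τ : ℕ → Ordinal) : Prop :=
  ∃ j, PLosing i k P j ∧ σ j < τ j ∧
    ∀ j', PLosing i k P j' → j' < j → σ j' = τ j'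

/-- Equality of `P`-signatures (on the relevant coordinates). -/
def sigEq (i k : ℕ) (P : Bool) (σ τ : ℕ → Ordinal) : Prop :=
  ∀ j, PLosing i k P j → σ j = τ j

/-- Lexicographic order on `P`-signatures. -/
def sigLe (i k : ℕ) (P : Bool) (σ τ : ℕ → Ordinal) : Prop :=
  sigLt i k P σ τ ∨ sigEq i k P σ τ

/-- Lexicographic strict order on prefixes `σ↾ℓ` of `P`-signatures. -/
def sigLtBelow (i k : ℕ) (P : Bool) (ℓ : ℕ) (σ τ : ℕ → Ordinal) : Prop :=
  ∃ j, PLosing i k P j ∧ j ≤ ℓ ∧ σ j < τ j ∧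
    ∀ j', PLosing i k P j' → j' < j → σ j' = τ j'

/-- Equality of the prefixes `σ↾ℓ`. -/
def sigEqBelow (i k : ℕ) (P : Bool) (ℓ : ℕ) (σ τ : ℕ → Ordinal) : Prop :=
  ∀ j, PLosing i k P j → j ≤ ℓ → σ j = τ j

/-- Lexicographic order on the prefixes `σ↾ℓ`. -/
def sigLeBelow (i k : ℕ) (P : Bool) (ℓ : ℕ) (σ τ : ℕ → Ordinal) : Prop :=
  sigLtBelow i k P ℓ σ τ ∨ sigEqBelow i k P ℓ σ τ

/-- Order on signatures extended by `∞` (represented by `none`) as maximum. -/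
def extLe (i k : ℕ) (P : Bool) : Option (ℕ → Ordinal) → Option (ℕ → Ordinal) → Prop
  | _, none => True
  | none, some _ => False
  | some σ, some τ => sigLe i k P σ τ

/-- Equality of signatures extended by `∞`. -/
def extEq (i k : ℕ) (P : Bool) : Option (ℕ → Ordinal) → Option (ℕ → Ordinal) → Prop
  | none, none => True
  | some σ, some τ => sigEq i k P σ τ
  | _, _ => False

/-- Order on prefixes `σ↾ℓ` of signatures extended by `∞`. -/
def extLeBelow (i k : ℕ) (P : Bool) (ℓ : ℕ) :
    Option (ℕ → Ordinal) → Option (ℕ → Ordinal) → Prop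
  | _, none => True
  | none, some _ => False
  | some σ, some τ => sigLeBelow i k P ℓ σ τ

/-- Strict order on prefixes `σ↾ℓ` of signatures extended by `∞`. -/
def extLtBelow (i k : ℕ) (P : Bool) (ℓ : ℕ) :
    Option (ℕ → Ordinal) → Option (ℕ → Ordinal) → Prop
  | none, _ => False
  | some _, none => True
  | some σ, some τ => sigLtBelow i k P ℓ σ τ

/-- `s` is the signature assignment `s(·,Σ)` of the strategy `S`: at an active
node with priority `j`, the coordinate `j` of the child's value is incremented
by one and the later coordinates are zeroed; at a non-active node of `S`, the
value is the least upper bound (in the lexicographic order) of the values at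
the `⪯`-minimal active descendants. -/
def SigDef (t : Label) (i k : ℕ) (P : Bool) (S : List ℕ → Prop)
    (s : List ℕ → ℕ → Ordinal) : Prop :=
  (∀ u j, Active t i k P S u → t u = some (Sym.pri j) →
    ∀ j', PLosing i k P j' →
      (j' < j → s u j' = s (u ++ [0]) j') ∧
      (j' = j → s u j' = s (u ++ [0]) j + 1) ∧
      (j < j' → s u j' = 0)) ∧
  (∀ u, S u → ¬ Active t i k P S u →
    (∀ w, Suk t i k P S u w → sigLe i k P (s w) (s u)) ∧
    (∀ τ, (∀ w, Suk t i k P S u w → sigLe i k P (s w) τ) → sigLe i k P (s u) τ))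

/-- The subtree of `t` rooted at `u`. -/
def subtree (t : Label) (u : List ℕ) : Label := fun w => t (u ++ w)

/-- The tree with a unary root symbol `s` and subtree `t`. -/
def node1 (s : Sym) (t : Label) : Label := fun u =>
  match u with
  | [] => some s
  | 0 :: w => t w
  | _ => none

/-- The tree with root the binary choice symbol of player `b` and the given
left and right subtrees. -/
def node2 (b : Bool) (tL tR : Label) : Label := fun u =>
  match u with
  | [] => some (Sym.choice b)
  | 0 :: w => tL w
  | 1 :: w => tR w
  | _ => none

/-- `σ` is the value `s(ε,Σ)` of some winning strategy `Σ` of `P` in `G(t)`. -/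
def ValOf (t : Label) (i k : ℕ) (P : Bool) (σ : ℕ → Ordinal) : Prop :=
  ∃ (S : List ℕ → Prop) (s : List ℕ → ℕ → Ordinal),
    IsWinningStrategy t P S ∧ SigDef t i k P S s ∧ sigEq i k P σ (s [])

/-- `σ` is the signature `σ_P(t)`: the lexicographic infimum (= minimum) of the
values of the winning strategies of `P` in `G(t)`. -/
def IsSigOf (t : Label) (i k : ℕ) (P : Bool) (σ : ℕ → Ordinal) : Prop :=
  ValOf t i k P σ ∧ ∀ τ, ValOf t i k P τ → sigLe i k P σ τ

/-- `a` is the extended signature `σ_P(t)`, with `none` representing `∞`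
(no winning strategy of `P` exists). -/
def IsExtSigOf (t : Label) (i k : ℕ) (P : Bool) : Option (ℕ → Ordinal) → Prop
  | none => ¬ ∃ S : List ℕ → Prop, IsWinningStrategy t P S
  | some σ => IsSigOf t i k P σ

/-- The six invariants of the signature lemma for a pair of assignments
`σ' : Bool → Label → Option (ℕ → Ordinal)` (with `none` playing the role of
`∞`): (1) `σ'_P(t) = ∞` iff `P` loses `G(t)`; (2) `σ'_P(~(t)) = (0,…,0)` if `P`
wins `G(~(t))`; (3) prepending a `P`-winning priority `j` keeps the coordinates
below `j` and zeroes the ones `≥ j`; (4) prepending a `P`-losing priority `j`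
increments coordinate `j` and zeroes the later ones; (5) the min rule at `P`'s
choice nodes; (6) the max rule at the opponent's choice nodes. -/
def SigInvariants (i k : ℕ) (σ' : Bool → Label → Option (ℕ → Ordinal)) : Prop :=
  (∀ (P : Bool) (t : Label), GoodTree t i k →
    (σ' P t = none ↔ ¬ ∃ S : List ℕ → Prop, IsWinningStrategy t P S)) ∧
  (∀ (P : Bool) (t : Label), GoodTree t i k →
    (∃ S : List ℕ → Prop, IsWinningStrategy (node1 Sym.neg t) P S) →
    ∃ τ, σ' P (node1 Sym.neg t) = some τ ∧ ∀ j, PLosing i k P j → τ j = 0) ∧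
  (∀ (P : Bool) (t : Label) (j : ℕ) (τ : ℕ → Ordinal), GoodTree t i k →
    PWinning i k P j → σ' P t = some τ →
    ∃ τ', σ' P (node1 (Sym.pri j) t) = some τ' ∧ ∀ j', PLosing i k P j' →
      (j' < j → τ' j' = τ j') ∧ (j ≤ j' → τ' j' = 0)) ∧
  (∀ (P : Bool) (t : Label) (j : ℕ) (τ : ℕ → Ordinal), GoodTree t i k →
    PLosing i k P j → σ' P t = some τ →
    ∃ τ', σ' P (node1 (Sym.pri j) t) = some τ' ∧ ∀ j', PLosing i k P j' →
      (j' < j → τ' j' = τ j') ∧ (j' = j → τ' j' = τ j + 1) ∧ (j < j' → τ' j' = 0)) ∧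
  (∀ (P : Bool) (tL tR : Label), GoodTree tL i k → GoodTree tR i k →
    (extLe i k P (σ' P tL) (σ' P tR) →
      extEq i k P (σ' P (node2 P tL tR)) (σ' P tL)) ∧
    (extLe i k P (σ' P tR) (σ' P tL) →
      extEq i k P (σ' P (node2 P tL tR)) (σ' P tR))) ∧
  (∀ (P : Bool) (tL tR : Label), GoodTree tL i k → GoodTree tR i k →
    (extLe i k P (σ' P tL) (σ' P tR) →
      extEq i k P (σ' P (node2 (!P) tL tR)) (σ' P tR)) ∧
    (extLe i k P (σ' P tR) (σ' P tL) →
      extEq i k P (σ' P (node2 (!P) tL tR)) (σ' P tL)))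

/-- `S` is a `σ'`-optimal strategy of `P` in `G(t)`: at each position controlled
by `P` it moves to a subtree of lexicographically minimal `σ'`-value for the
appropriate player (depending on whether the position is kept or switched). -/
def IsOptimal (t : Label) (i k : ℕ) (P : Bool)
    (σ' : Bool → Label → Option (ℕ → Ordinal)) (S : List ℕ → Prop) : Prop :=
  IsStrategy t P S ∧
  ∀ u (d : ℕ), S u → ctrl t u = some P → S (u ++ [d]) →
    ∀ d' : ℕ, t (u ++ [d']) ≠ none →
      extLe i k (if kept t u then P else !P)
        (σ' (if kept t u then P else !P) (subtree t (u ++ [d])))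
        (σ' (if kept t u then P else !P) (subtree t (u ++ [d'])))

/-- A partial strategy of `P`: a `P`-deterministic behaviour (nonempty,
prefix-closed, without maximal elements, deterministic at `P`'s positions). -/
def IsPartialStrategy (t : Label) (P : Bool) (S : List ℕ → Prop) : Prop :=
  S [] ∧
  (∀ u, S u → t u ≠ none) ∧
  (∀ u (d : ℕ), S (u ++ [d]) → S u) ∧
  (∀ u, S u → ctrl t u = some P → ∃! d : ℕ, S (u ++ [d])) ∧
  (∀ u, S u → ∃ d : ℕ, S (u ++ [d]))

/-- The position `u` is not reachable by the partial strategy `S` of `P`: it is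
a child, outside `S`, of an opponent position of `S`. -/
def NotReachable (t : Label) (P : Bool) (S : List ℕ → Prop) (u : List ℕ) : Prop :=
  ∃ (w : List ℕ) (d : ℕ), u = w ++ [d] ∧ S w ∧ ¬ S u ∧ t u ≠ none ∧ ctrl t w = some (!P)


/-! ### Auxiliary order lemmas on signatures -/

universe u

variable {i k : ℕ} {P : Bool}

lemma PLosing.le_k {j : ℕ} (h : PLosing i k P j) : j ≤ k := h.2.1

/-- first-difference decomposition -/
lemma firstDiff (i k : ℕ) (P : Bool) (σ τ : ℕ → Ordinal.{u}) :
    sigEq i k P σ τ ∨ ∃ j, PLosing i k P j ∧ σ j ≠ τ j ∧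
      ∀ j', PLosing i k P j' → j' < j → σ j' = τ j' := by
  classical
  by_cases h : ∀ j, PLosing i k P j → σ j = τ j
  · exact Or.inl h
  · push_neg at h
    have hex : ∃ j, PLosing i k P j ∧ σ j ≠ τ j := h
    refine Or.inr ⟨Nat.find hex, (Nat.find_spec hex).1, (Nat.find_spec hex).2, ?_⟩
    intro j' hj' hlt
    by_contra hne
    exact Nat.find_min hex hlt ⟨hj', hne⟩

lemma sigLe_refl (σ : ℕ → Ordinal.{u}) : sigLe i k P σ σ := Or.inr fun _ _ => rfl

lemma sigLe_total (σ τ : ℕ → Ordinal.{u}) : sigLe i k P σ τ ∨ sigLe i k P τ σ := by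
  rcases firstDiff i k P σ τ with h | ⟨j, hj, hne, hfst⟩
  · exact Or.inl (Or.inr h)
  · rcases lt_or_gt_of_ne hne with hlt | hgt
    · exact Or.inl (Or.inl ⟨j, hj, hlt, hfst⟩)
    · exact Or.inr (Or.inl ⟨j, hj, hgt, fun j' h1 h2 => (hfst j' h1 h2).symm⟩)

lemma sigLe_of_coord_le {σ τ : ℕ → Ordinal.{u}} (h : ∀ j, PLosing i k P j → σ j ≤ τ j) :
    sigLe i k P σ τ := by
  rcases firstDiff i k P σ τ with h' | ⟨j, hj, hne, hfst⟩
  · exact Or.inr h'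
  · exact Or.inl ⟨j, hj, lt_of_le_of_ne (h j hj) hne, hfst⟩

lemma sigLe_trans {σ τ ρ : ℕ → Ordinal.{u}} (h1 : sigLe i k P σ τ) (h2 : sigLe i k P τ ρ) :
    sigLe i k P σ ρ := by
  rcases h1 with ⟨j1, hj1, hlt1, hf1⟩ | he1
  · rcases h2 with ⟨j2, hj2, hlt2, hf2⟩ | he2
    · rcases lt_trichotomy j1 j2 with h | h | h
      · exact Or.inl ⟨j1, hj1, hlt1.trans_eq (hf2 j1 hj1 h), fun j' a b =>
          (hf1 j' a b).trans (hf2 j' a (b.trans h))⟩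
      · subst h
        exact Or.inl ⟨j1, hj1, hlt1.trans hlt2, fun j' a b => (hf1 j' a b).trans (hf2 j' a b)⟩
      · exact Or.inl ⟨j2, hj2, ((hf1 j2 hj2 h).symm ▸ hlt2 : σ j2 < ρ j2), fun j' a b =>
          (hf1 j' a (b.trans h)).trans (hf2 j' a b)⟩
    · exact Or.inl ⟨j1, hj1, hlt1.trans_eq (he2 j1 hj1), fun j' a b => (hf1 j' a b).trans (he2 j' a)⟩
  · rcases h2 with ⟨j2, hj2, hlt2, hf2⟩ | he2
    · exact Or.inl ⟨j2, hj2, (he1 j2 hj2) ▸ hlt2, fun j' a b => (he1 j' a).trans (hf2 j' a b)⟩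
    · exact Or.inr fun j a => (he1 j a).trans (he2 j a)

lemma sigEq.symm {σ τ : ℕ → Ordinal.{u}} (h : sigEq i k P σ τ) : sigEq i k P τ σ :=
  fun j hj => (h j hj).symm

/-! Below versions -/

variable {ℓ : ℕ}

lemma sigEqBelow.symm' {σ τ : ℕ → Ordinal.{u}} (h : sigEqBelow i k P ℓ σ τ) :
    sigEqBelow i k P ℓ τ σ := fun j hj hjl => (h j hj hjl).symm

lemma sigEqBelow.trans' {σ τ ρ : ℕ → Ordinal.{u}} (h1 : sigEqBelow i k P ℓ σ τ)
    (h2 : sigEqBelow i k P ℓ τ ρ) : sigEqBelow i k P ℓ σ ρ :=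
  fun j hj hjl => (h1 j hj hjl).trans (h2 j hj hjl)

lemma sigLeBelow_of_eqBelow {σ τ : ℕ → Ordinal.{u}} (h : sigEqBelow i k P ℓ σ τ) :
    sigLeBelow i k P ℓ σ τ := Or.inr h

lemma sigEqBelow_of_sigEq {σ τ : ℕ → Ordinal.{u}} (h : sigEq i k P σ τ) :
    sigEqBelow i k P ℓ σ τ := fun j hj _ => h j hj

lemma sigLeBelow_of_sigLe {σ τ : ℕ → Ordinal.{u}} (h : sigLe i k P σ τ) :
    sigLeBelow i k P ℓ σ τ := by
  rcases h with ⟨j, hj, hlt, hf⟩ | he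
  · rcases le_or_gt j ℓ with hle | hgt
    · exact Or.inl ⟨j, hj, hle, hlt, hf⟩
    · exact Or.inr fun j' hj' hjl => hf j' hj' (lt_of_le_of_lt hjl hgt)
  · exact Or.inr fun j hj _ => he j hj

lemma sigLeBelow_trans {σ τ ρ : ℕ → Ordinal.{u}} (h1 : sigLeBelow i k P ℓ σ τ)
    (h2 : sigLeBelow i k P ℓ τ ρ) : sigLeBelow i k P ℓ σ ρ := by
  rcases h1 with ⟨j1, hj1, hl1, hlt1, hf1⟩ | he1
  · rcases h2 with ⟨j2, hj2, hl2, hlt2, hf2⟩ | he2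
    · rcases lt_trichotomy j1 j2 with h | h | h
      · exact Or.inl ⟨j1, hj1, hl1, hlt1.trans_eq (hf2 j1 hj1 h), fun j' a b =>
          (hf1 j' a b).trans (hf2 j' a (b.trans h))⟩
      · subst h
        exact Or.inl ⟨j1, hj1, hl1, hlt1.trans hlt2, fun j' a b =>
          (hf1 j' a b).trans (hf2 j' a b)⟩
      · exact Or.inl ⟨j2, hj2, hl2, ((hf1 j2 hj2 h).symm ▸ hlt2 : σ j2 < ρ j2), fun j' a b =>
          (hf1 j' a (b.trans h)).trans (hf2 j' a b)⟩
    · exact Or.inl ⟨j1, hj1, hl1, hlt1.trans_eq (he2 j1 hj1 hl1), fun j' a b =>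
        (hf1 j' a b).trans (he2 j' a (le_of_lt (lt_of_lt_of_le b hl1)))⟩
  · rcases h2 with ⟨j2, hj2, hl2, hlt2, hf2⟩ | he2
    · exact Or.inl ⟨j2, hj2, hl2, (he1 j2 hj2 hl2) ▸ hlt2, fun j' a b =>
        (he1 j' a (le_of_lt (lt_of_lt_of_le b hl2))).trans (hf2 j' a b)⟩
    · exact Or.inr fun j a b => (he1 j a b).trans (he2 j a b)

lemma firstDiffBelow (i k : ℕ) (P : Bool) (ℓ : ℕ) (σ τ : ℕ → Ordinal.{u}) :
    sigEqBelow i k P ℓ σ τ ∨ ∃ j, PLosing i k P j ∧ j ≤ ℓ ∧ σ j ≠ τ j ∧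
      ∀ j', PLosing i k P j' → j' < j → σ j' = τ j' := by
  classical
  by_cases h : ∀ j, PLosing i k P j → j ≤ ℓ → σ j = τ j
  · exact Or.inl h
  · push_neg at h
    have hex : ∃ j, PLosing i k P j ∧ j ≤ ℓ ∧ σ j ≠ τ j := by
      obtain ⟨j, h1, h2, h3⟩ := h; exact ⟨j, h1, h2, h3⟩
    refine Or.inr ⟨Nat.find hex, (Nat.find_spec hex).1, (Nat.find_spec hex).2.1,
      (Nat.find_spec hex).2.2, ?_⟩
    intro j' hj' hlt
    by_contra hne
    exact Nat.find_min hex hlt ⟨hj', le_of_lt (lt_of_lt_of_le hlt (Nat.find_spec hex).2.1), hne⟩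

lemma sigLtBelow_of_not_leBelow {σ τ : ℕ → Ordinal.{u}}
    (h : ¬ sigLeBelow i k P ℓ σ τ) : sigLtBelow i k P ℓ τ σ := by
  rcases firstDiffBelow i k P ℓ σ τ with he | ⟨j, hj, hl, hne, hf⟩
  · exact absurd (Or.inr he) h
  · rcases lt_or_gt_of_ne hne with hlt | hgt
    · exact absurd (Or.inl ⟨j, hj, hl, hlt, hf⟩) h
    · exact ⟨j, hj, hl, hgt, fun j' a b => (hf j' a b).symm⟩

lemma not_ltBelow_and_leBelow {σ θ : ℕ → Ordinal.{u}}
    (h1 : sigLtBelow i k P ℓ θ σ) (h2 : sigLeBelow i k P ℓ σ θ) : False := by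
  obtain ⟨j, hj, hl, hlt, hf⟩ := h1
  rcases h2 with ⟨j2, hj2, hl2, hlt2, hf2⟩ | he
  · rcases lt_trichotomy j2 j with h | h | h
    · exact absurd ((hf j2 hj2 h) ▸ hlt2) (lt_irrefl _)
    · subst h; exact absurd (hlt.trans hlt2) (lt_irrefl _)
    · exact absurd ((hf2 j hj h).symm ▸ hlt) (lt_irrefl _)
  · exact absurd ((he j hj hl) ▸ hlt) (lt_irrefl _)


/-! ### List and tree utilities -/

lemma prefix_snoc_iff {v y : List ℕ} {d : ℕ} :
    v <+: y ++ [d] ↔ v = y ++ [d] ∨ v <+: y := by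
  constructor
  · intro h
    rcases le_or_gt v.length y.length with hle | hgt
    · exact Or.inr (List.prefix_of_prefix_length_le h (List.prefix_append y [d]) hle)
    · left
      refine h.eq_of_length_le ?_
      simpa using hgt
  · rintro (rfl | h)
    · exact List.prefix_refl _
    · exact h.trans (List.prefix_append y [d])

lemma length_lt_of_prefix_ne {v x : List ℕ} (h : v <+: x) (hne : v ≠ x) :
    v.length < x.length :=
  lt_of_le_of_ne h.length_le (fun he => hne (h.eq_of_length he))

lemma prefix_closed_of {S : List ℕ → Prop} (hc : ∀ u (d : ℕ), S (u ++ [d]) → S u) :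
    ∀ x, S x → ∀ v, v <+: x → S v := by
  intro x
  induction x using List.reverseRecOn with
  | nil => intro hx v hv; rwa [List.prefix_nil.1 hv]
  | append_singleton y d ih =>
    intro hx v hv
    rcases prefix_snoc_iff.1 hv with rfl | hv'
    · exact hx
    · exact ih (hc y d hx) v hv'

lemma tree_anc_ne_none {t : Label} {i k : ℕ} (ht : IsTree t i k) :
    ∀ x, t x ≠ none → ∀ v, v <+: x → t v ≠ none := by
  intro x
  induction x using List.reverseRecOn with
  | nil => intro hx v hv; rwa [List.prefix_nil.1 hv]
  | append_singleton y d ih =>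
    intro hx v hv
    have hy : t y ≠ none := fun h => hx (ht.2.2.1 y d h)
    rcases prefix_snoc_iff.1 hv with rfl | hv'
    · exact hx
    · exact ih hy v hv'

lemma pref_zero (α : ℕ → ℕ) : pref α 0 = [] := by simp [pref]

lemma pref_succ (α : ℕ → ℕ) (n : ℕ) : pref α (n + 1) = pref α n ++ [α n] := by
  simp [pref, List.range_succ]

lemma pref_length (α : ℕ → ℕ) (n : ℕ) : (pref α n).length = n := by simp [pref]

lemma pref_take (α : ℕ → ℕ) {m n : ℕ} (h : m ≤ n) : (pref α n).take m = pref α m := by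
  simp only [pref, ← List.map_take, List.take_range, min_eq_left h]

lemma pref_prefix (α : ℕ → ℕ) {m n : ℕ} (h : m ≤ n) : pref α m <+: pref α n := by
  rw [← pref_take α h]; exact List.take_prefix _ _

lemma pref_add (α : ℕ → ℕ) (n m : ℕ) :
    pref α (n + m) = pref α n ++ pref (fun q => α (n + q)) m := by
  induction m with
  | zero => simp [pref_zero]
  | succ m ih => rw [← Nat.add_assoc, pref_succ, ih, pref_succ, List.append_assoc]

/-- a branch extending a finite node -/
noncomputable def glue (u : List ℕ) (β : ℕ → ℕ) : ℕ → ℕ := fun m =>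
  if h : m < u.length then u.get ⟨m, h⟩ else β (m - u.length)

lemma pref_glue_le {u : List ℕ} {β : ℕ → ℕ} {n : ℕ} (h : n ≤ u.length) :
    pref (glue u β) n = u.take n := by
  induction n with
  | zero => simp [pref_zero]
  | succ n ih =>
    have hn : n < u.length := h
    rw [pref_succ, ih (le_of_lt hn)]
    have : glue u β n = u.get ⟨n, hn⟩ := dif_pos hn
    rw [this]
    simp [List.take_concat_get']

lemma pref_glue_add (u : List ℕ) (β : ℕ → ℕ) (n : ℕ) :
    pref (glue u β) (u.length + n) = u ++ pref β n := by
  induction n with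
  | zero => simp [pref_glue_le (le_refl u.length), pref_zero]
  | succ n ih =>
    rw [← Nat.add_assoc, pref_succ, ih]
    have : glue u β (u.length + n) = β n := by
      unfold glue
      rw [dif_neg (by omega)]
      congr 1
      omega
    rw [this, pref_succ, List.append_assoc]

lemma subtree_goodTree {t : Label} {i k : ℕ} (ht : GoodTree t i k) {u : List ℕ}
    (hu : t u ≠ none) : GoodTree (subtree t u) i k := by
  obtain ⟨htree, hwf⟩ := ht
  constructor
  · refine ⟨?_, ?_, ?_, ?_⟩
    · show t (u ++ []) ≠ none
      rwa [List.append_nil]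
    · intro w s hw d
      have := htree.2.1 (u ++ w) s hw d
      rwa [List.append_assoc] at this
    · intro w d hw
      have := htree.2.2.1 (u ++ w) d hw
      rwa [List.append_assoc] at this
    · intro w j hw
      exact htree.2.2.2 (u ++ w) j hw
  · intro β hβ
    have hα : IsBranch t (glue u β) := by
      intro n
      rcases le_or_gt n u.length with hle | hgt
      · rw [pref_glue_le hle]
        exact tree_anc_ne_none htree u hu _ (List.take_prefix _ _)
      · obtain ⟨m, rfl⟩ := Nat.exists_eq_add_of_le (le_of_lt hgt)
        rw [pref_glue_add]
        exact hβ m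
    have hfin := hwf (glue u β) hα
    have : {n : ℕ | subtree t u (pref β n) = some Sym.neg} ⊆
        (fun n => u.length + n) ⁻¹' {n : ℕ | t (pref (glue u β) n) = some Sym.neg} := by
      intro n hn
      simp only [Set.mem_preimage, Set.mem_setOf_eq, pref_glue_add]
      exact hn
    exact Set.Finite.subset (Set.Finite.preimage (Set.injOn_of_injective
      (fun a b h => by omega)) hfin) this

lemma tildeCount_append {t : Label} {u v : List ℕ}
    (h : ∀ m, m < u.length → t (u.take m) ≠ some Sym.neg) :
    tildeCount t (u ++ v) = tildeCount (subtree t u) v := by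
  unfold tildeCount
  rw [List.length_append, List.range_add, List.countP_append]
  have h1 : (List.range u.length).countP
      (fun m => decide (t ((u ++ v).take m) = some Sym.neg)) = 0 := by
    rw [List.countP_eq_zero]
    intro m hm
    rw [List.mem_range] at hm
    rw [List.take_append_of_le_length (le_of_lt hm)]
    simpa using h m hm
  rw [h1, Nat.zero_add, List.countP_map]
  apply List.countP_congr
  intro m hm
  rw [List.mem_range] at hm
  simp only [Function.comp]
  rw [decide_eq_true_eq, decide_eq_true_eq]
  rw [List.take_append]
  rw [List.take_of_length_le (by omega), Nat.add_sub_cancel_left]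
  rfl

lemma kept_append {t : Label} {u v : List ℕ}
    (h : ∀ m, m < u.length → t (u.take m) ≠ some Sym.neg) :
    kept t (u ++ v) ↔ kept (subtree t u) v := by
  unfold kept
  rw [tildeCount_append h]

lemma ctrl_append {t : Label} {u v : List ℕ}
    (h : ∀ m, m < u.length → t (u.take m) ≠ some Sym.neg) :
    ctrl t (u ++ v) = ctrl (subtree t u) v := by
  have hk := kept_append (t := t) (u := u) (v := v) h
  have hs : t (u ++ v) = subtree t u v := rfl
  unfold ctrl
  rw [hs]
  rcases h' : subtree t u v with _ | s
  · rfl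
  · cases s with
    | pri j => rfl
    | neg => rfl
    | choice Q =>
      simp only []
      congr 1
      by_cases hkk : kept (subtree t u) v
      · rw [if_pos (hk.2 hkk), if_pos hkk]
      · rw [if_neg (fun hh => hkk (hk.1 hh)), if_neg hkk]

lemma effPri_append {t : Label} {u v : List ℕ}
    (h : ∀ m, m < u.length → t (u.take m) ≠ some Sym.neg) :
    effPri t (u ++ v) = effPri (subtree t u) v := by
  have hk := kept_append (t := t) (u := u) (v := v) h
  have hs : t (u ++ v) = subtree t u v := rfl
  unfold effPri
  rw [hs]
  rcases h' : subtree t u v with _ | s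
  · rfl
  · cases s with
    | choice Q => rfl
    | neg => rfl
    | pri j =>
      simp only []
      congr 1
      by_cases hkk : kept (subtree t u) v
      · rw [if_pos (hk.2 hkk), if_pos hkk]
      · rw [if_neg (fun hh => hkk (hk.1 hh)), if_neg hkk]
/-! ### Well-foundedness of the active-descendant relation -/

lemma gg_wf {t : Label} {i k : ℕ} {P : Bool} {S : List ℕ → Prop}
    (hSc : ∀ u (d : ℕ), S (u ++ [d]) → S u)
    (hw : ∀ α, IsPlayOf S α → WinsBranch t P α) :
    WellFounded (fun x u => Gg t i k P S u x) := by
  haveI : IsStrictOrder (List ℕ) (fun x u => Gg t i k P S u x) :=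
    { irrefl := fun a h => h.2.2.2.1 rfl
      trans := by
        rintro a b c ⟨hSb, hSa, hba, hne1, -⟩ ⟨hSc, -, hcb, hne2, w', hw', hw1, hw2⟩
        refine ⟨hSc, hSa, hcb.trans hba, ?_, w', hw', hw1, (hw2.trans hba : _)⟩
        intro he
        have l1 := length_lt_of_prefix_ne hcb hne2
        have l2 := length_lt_of_prefix_ne hba hne1
        rw [he] at l1
        omega }
  rw [RelEmbedding.wellFounded_iff_isEmpty]
  by_contra hcon
  rw [not_isEmpty_iff] at hcon
  obtain ⟨f⟩ := hcon
  set u : ℕ → List ℕ := fun n => f n with hu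
  have step : ∀ n, Gg t i k P S (u n) (u (n+1)) := fun n => f.map_rel_iff.2 (Nat.lt_succ_self n)
  have hpref : ∀ n, u n <+: u (n+1) := fun n => (step n).2.2.1
  have hS : ∀ n, S (u n) := fun n => (step n).1
  have hlen : ∀ n, (u n).length < (u (n+1)).length := fun n =>
    length_lt_of_prefix_ne (hpref n) ((step n).2.2.2.1)
  have hlenmono : StrictMono (fun n => (u n).length) := strictMono_nat_of_lt_succ hlen
  have hnlen : ∀ n, n ≤ (u n).length := fun n => hlenmono.le_apply
  have hmono : ∀ m n, m ≤ n → u m <+: u n := by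
    intro m n h
    induction h with
    | refl => exact List.prefix_refl _
    | step h ih => exact ih.trans (hpref _)
  set α : ℕ → ℕ := fun m => (u (m+1)).getD m 0 with hα
  have hprefα : ∀ n N, n ≤ (u N).length → pref α n = (u N).take n := by
    intro n
    induction n with
    | zero => intro N _; simp [pref_zero]
    | succ n ih =>
      intro N hn
      have h1 : n < (u (n+1)).length := lt_of_lt_of_le (Nat.lt_succ_self n) (hnlen (n+1))
      have h2 : n < (u N).length := lt_of_lt_of_le (Nat.lt_succ_self n) hn
      rw [pref_succ, ih N (le_of_lt h2)]
      have hval : α n = (u N).getD n 0 := by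
        rcases le_total (n+1) N with h | h
        · obtain ⟨z, hz⟩ := hmono _ _ h
          show (u (n+1)).getD n 0 = (u N).getD n 0
          rw [← hz, List.getD_append _ _ _ _ h1]
        · obtain ⟨z, hz⟩ := hmono _ _ h
          show (u (n+1)).getD n 0 = (u N).getD n 0
          rw [← hz, List.getD_append _ _ _ _ h2]
      rw [hval, List.getD_eq_getElem _ _ h2, List.take_concat_get']
  have hplay : IsPlayOf S α := by
    intro n
    rw [hprefα n n (hnlen n)]
    exact prefix_closed_of hSc _ (hS n) _ (List.take_prefix _ _)
  have hact : ∀ N, ∃ n, N ≤ n ∧ Active t i k P S (pref α n) := by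
    intro N
    obtain ⟨w, hwA, hw1, hw2⟩ := (step N).2.2.2.2
    refine ⟨w.length, le_trans (hnlen N) hw1.length_le, ?_⟩
    have : pref α w.length = w := by
      rw [hprefα _ (N+1) hw2.length_le]
      exact (List.prefix_iff_eq_take.1 hw2).symm
    rwa [this]
  have hnoneg : ∀ m, t (pref α m) ≠ some Sym.neg := by
    intro m
    obtain ⟨n, hn, hA⟩ := hact (m+1)
    obtain ⟨j, _, _, hj3⟩ := hA.2
    refine (hj3 (pref α m) (pref_prefix α (by omega)) ?_).1
    intro he
    have := congrArg List.length he
    rw [pref_length, pref_length] at this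
    omega
  have hkept : ∀ n, kept t (pref α n) := by
    intro n
    unfold kept tildeCount
    have : (List.range (pref α n).length).countP
        (fun m => decide (t ((pref α n).take m) = some Sym.neg)) = 0 := by
      rw [List.countP_eq_zero]
      intro m hm
      rw [List.mem_range, pref_length] at hm
      rw [pref_take α (le_of_lt hm)]
      simpa using hnoneg m
    rw [this]
  have heff : ∀ n j, t (pref α n) = some (Sym.pri j) → effPri t (pref α n) = some j := by
    intro n j h
    unfold effPri
    rw [h]
    show some (if kept t (pref α n) then j else j + 1) = some j
    rw [if_pos (hkept n)]
  have heff' : ∀ n j', effPri t (pref α n) = some j' → t (pref α n) = some (Sym.pri j') := by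
    intro n j' h
    unfold effPri at h
    rcases h' : t (pref α n) with _ | s
    · rw [h'] at h
      simp at h
    · cases s with
      | pri j =>
        rw [h'] at h
        have h2 : some (if kept t (pref α n) then j else j + 1) = some j' := h
        rw [if_pos (hkept n)] at h2
        rw [Option.some_inj.1 h2]
      | choice b => rw [h'] at h; simp at h
      | neg => rw [h'] at h; simp at h
  have hJex : ∃ j, ∃ n, Active t i k P S (pref α n) ∧ t (pref α n) = some (Sym.pri j) := by
    obtain ⟨n, _, hA⟩ := hact 0
    obtain ⟨j, hj1, _⟩ := hA.2
    exact ⟨j, n, hA, hj1⟩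
  classical
  set jstar := Nat.find hJex with hjstar
  obtain ⟨n₀, hAn₀, hpn₀⟩ := Nat.find_spec hJex
  have hmin : ∀ j n, Active t i k P S (pref α n) → t (pref α n) = some (Sym.pri j) →
      jstar ≤ j := by
    intro j n hA hp
    by_contra h
    exact Nat.find_min hJex (by omega) ⟨n, hA, hp⟩
  have hne_pref : ∀ m n : ℕ, m < n → pref α m ≠ pref α n := by
    intro m n h he
    have := congrArg List.length he
    rw [pref_length, pref_length] at this
    omega
  have hconst : ∀ n, n₀ < n → Active t i k P S (pref α n) →
      t (pref α n) = some (Sym.pri jstar) := by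
    intro n hn hA
    obtain ⟨j, hj1, _, hj3⟩ := hA.2
    have hle : j ≤ jstar :=
      (hj3 (pref α n₀) (pref_prefix α (le_of_lt hn)) (hne_pref n₀ n hn)).2 jstar hpn₀
    have hge : jstar ≤ j := hmin j n hA hj1
    rw [hj1, le_antisymm hle hge]
  have hPLstar : PLosing i k P jstar := by
    obtain ⟨j, hj1, hj2, _⟩ := hAn₀.2
    rw [hj1] at hpn₀
    simp only [Option.some_inj, Sym.pri.injEq] at hpn₀
    rwa [hpn₀] at hj2
  have hinfstar : InfOften t α jstar := by
    intro hfin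
    obtain ⟨b, hb⟩ := hfin.bddAbove
    obtain ⟨n, hn, hA⟩ := hact (max b n₀ + 1)
    have h1 : b ≤ max b n₀ := le_max_left _ _
    have h2 : n₀ ≤ max b n₀ := le_max_right _ _
    have hp := hconst n (by omega) hA
    have hmem : n ∈ {m : ℕ | effPri t (pref α m) = some jstar} := heff n jstar hp
    have := hb hmem
    omega
  have hnotinf : ∀ j', j' < jstar → ¬ InfOften t α j' := by
    intro j' hj' hinf'
    obtain ⟨m, hm⟩ := hinf'.nonempty
    have hp := heff' m j' hm
    obtain ⟨n, hn, hA⟩ := hact (m+1)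
    obtain ⟨j, hj1, _, hj3⟩ := hA.2
    have h1 : j ≤ j' :=
      (hj3 (pref α m) (pref_prefix α (by omega)) (hne_pref m n (by omega))).2 j' hp
    have h2 := hmin j n hA hj1
    omega
  obtain ⟨j, hinfj, hminj, hpar⟩ := hw α hplay
  have hjeq : j = jstar := by
    rcases lt_trichotomy j jstar with h | h | h
    · exact absurd hinfj (hnotinf j h)
    · exact h
    · exact absurd hinfstar (hminj jstar h)
  rw [hjeq] at hpar
  have hodd := hPLstar.2.2
  cases P with
  | true =>
    have h1 : Even jstar := hpar.2 rfl
    have h2 : Odd jstar := hodd.2 rfl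
    exact (Nat.not_odd_iff_even.2 h1) h2
  | false =>
    have h1 : ¬ Even jstar := fun he => by simpa using hpar.1 he
    have h2 : ¬ Odd jstar := fun ho => by simpa using hodd.1 ho
    rcases Nat.even_or_odd jstar with h | h
    · exact h1 h
    · exact h2 h
/-! ### Well-foundedness of sigLt and lubs -/

lemma sigLt_wf (i k : ℕ) (P : Bool) : WellFounded (sigLt.{u} i k P) := by
  classical
  have hwf : WellFounded
      ((· < ·) : Lex (Fin (k+1) → Ordinal.{u}) → Lex (Fin (k+1) → Ordinal.{u}) → Prop) :=
    (inferInstance : WellFoundedLT (Lex (Fin (k+1) → Ordinal.{u}))).wf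
  have h2 := InvImage.wf (fun σ : ℕ → Ordinal.{u} =>
    toLex (fun m : Fin (k+1) => if PLosing i k P m.1 then σ m.1 else 0)) hwf
  refine Subrelation.wf (fun {σ τ} hq => ?_) h2
  obtain ⟨j, hj, hlt, hf⟩ := hq
  have hjk : j < k + 1 := Nat.lt_succ_of_le hj.le_k
  refine ⟨⟨j, hjk⟩, ?_, ?_⟩
  · rintro ⟨m, hm⟩ hmj
    rw [Fin.mk_lt_mk] at hmj
    show (if PLosing i k P m then σ m else 0) = (if PLosing i k P m then τ m else 0)
    by_cases h : PLosing i k P m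
    · rw [if_pos h, if_pos h, hf m h hmj]
    · rw [if_neg h, if_neg h]
  · show (if PLosing i k P j then σ j else 0) < (if PLosing i k P j then τ j else 0)
    rw [if_pos hj, if_pos hj]
    exact hlt

noncomputable def lubF (i k : ℕ) (P : Bool) {ι : Type} (f : ι → ℕ → Ordinal.{u}) : ℕ → Ordinal.{u} :=
  (sigLt_wf.{u} i k P).min {τ | ∀ x : ι, sigLe i k P (f x) τ}
    ⟨fun j => ⨆ x, f x j, fun x =>
      sigLe_of_coord_le (fun j _ => Ordinal.le_iSup (fun y => f y j) x)⟩

lemma lubF_ub {i k : ℕ} {P : Bool} {ι : Type} (f : ι → ℕ → Ordinal.{u}) (x : ι) :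
    sigLe i k P (f x) (lubF i k P f) := by
  have h := WellFounded.min_mem (sigLt_wf.{u} i k P) {τ | ∀ x : ι, sigLe i k P (f x) τ}
    ⟨fun j => ⨆ x, f x j, fun x =>
      sigLe_of_coord_le (fun j _ => Ordinal.le_iSup (fun y => f y j) x)⟩
  exact h x

lemma lubF_least {i k : ℕ} {P : Bool} {ι : Type} (f : ι → ℕ → Ordinal.{u}) {τ : ℕ → Ordinal.{u}}
    (h : ∀ x, sigLe i k P (f x) τ) : sigLe i k P (lubF i k P f) τ := by
  have hnlt := WellFounded.not_lt_min (sigLt_wf.{u} i k P)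
    {τ' | ∀ x : ι, sigLe i k P (f x) τ'}
    (show τ ∈ {τ' | ∀ x : ι, sigLe i k P (f x) τ'} from h)
  rcases sigLe_total (i := i) (k := k) (P := P) (lubF i k P f) τ with h1 | h1
  · exact h1
  · rcases h1 with hlt | heq
    · exact absurd hlt hnlt
    · exact Or.inr heq.symm

/-! ### Existence of signature assignments -/

section mkS

variable {t : Label} {i k : ℕ} {P : Bool} {S : List ℕ → Prop}

lemma child_of_active (ht : GoodTree t i k) (hS : IsStrategy t P S) {u : List ℕ} {j : ℕ}
    (hSu : S u) (hp : t u = some (Sym.pri j)) : S (u ++ [0]) := by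
  have hctrl : ctrl t u = none := by unfold ctrl; rw [hp]
  have hne : t (u ++ [0]) ≠ none := by
    refine (ht.1.2.1 u _ hp 0).2 ?_
    show (0:ℕ) < (Sym.pri j).arity
    simp [Sym.arity]
  exact hS.2.2.2.2 u 0 hSu (by rw [hctrl]; simp) hne

lemma snoc_ne (u : List ℕ) (d : ℕ) : u ≠ u ++ [d] := by
  intro he
  have := congrArg List.length he
  simp at this

lemma gg_child (ht : GoodTree t i k) (hS : IsStrategy t P S) {u : List ℕ}
    (hA : Active t i k P S u) : Gg t i k P S u (u ++ [0]) := by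
  obtain ⟨hSu, j, hp, hrest⟩ := hA
  exact ⟨hSu, child_of_active ht hS hSu hp, List.prefix_append _ _, snoc_ne u 0,
    u, ⟨hSu, j, hp, hrest⟩, List.prefix_refl u, List.prefix_append _ _⟩

lemma gg_suk {u w : List ℕ} (hSu : S u) (hnA : ¬ Active t i k P S u)
    (hw : Suk t i k P S u w) : Gg t i k P S u w :=
  ⟨hSu, hw.1.1, hw.2.1, fun he => hnA (by rw [he]; exact hw.1),
    w, hw.1, hw.2.1, List.prefix_refl w⟩

open Classical in
noncomputable def mkS (ht : GoodTree t i k) (hS : IsStrategy t P S)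
    (hwf : WellFounded (fun x u => Gg t i k P S u x)) : List ℕ → ℕ → Ordinal.{u} :=
  hwf.fix fun u ih =>
    if hA : Active t i k P S u then
      fun j' => if j' < hA.2.choose then ih (u ++ [0]) (gg_child ht hS hA) j'
        else if j' = hA.2.choose then ih (u ++ [0]) (gg_child ht hS hA) hA.2.choose + 1 else 0
    else if hSu : S u then
      lubF i k P (fun w : {w // Suk t i k P S u w} => ih w.1 (gg_suk hSu hA w.2))
    else fun _ => 0

open Classical in
lemma mkS_eq (ht : GoodTree t i k) (hS : IsStrategy t P S)
    (hwf : WellFounded (fun x u => Gg t i k P S u x)) (u : List ℕ) :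
    mkS ht hS hwf u =
      if hA : Active t i k P S u then
        fun j' => if j' < hA.2.choose then mkS ht hS hwf (u ++ [0]) j'
          else if j' = hA.2.choose then mkS ht hS hwf (u ++ [0]) hA.2.choose + 1 else 0
      else if hSu : S u then
        lubF i k P (fun w : {w // Suk t i k P S u w} => mkS ht hS hwf w.1)
      else fun _ => 0 :=
  hwf.fix_eq _ u

open Classical in
lemma mkS_sigDef (ht : GoodTree t i k) (hS : IsStrategy t P S)
    (hwf : WellFounded (fun x u => Gg t i k P S u x)) :
    SigDef t i k P S (mkS ht hS hwf) := by
  constructor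
  · intro u j hA hp j' hPL
    have heq := mkS_eq ht hS hwf u
    rw [dif_pos hA] at heq
    have hc : hA.2.choose = j := by
      have h1 := hA.2.choose_spec.1
      have h2 : some (Sym.pri hA.2.choose) = some (Sym.pri j) := h1.symm.trans hp
      simpa using h2
    rw [hc] at heq
    refine ⟨?_, ?_, ?_⟩
    · intro hlt
      rw [show mkS ht hS hwf u j' = _ from congrFun heq j', if_pos hlt]
    · intro he
      rw [show mkS ht hS hwf u j' = _ from congrFun heq j', if_neg (by omega), if_pos he]
    · intro hgt
      rw [show mkS ht hS hwf u j' = _ from congrFun heq j', if_neg (by omega), if_neg (by omega)]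
  · intro u hSu hnA
    have heq := mkS_eq ht hS hwf u
    rw [dif_neg hnA, dif_pos hSu] at heq
    constructor
    · intro w hw
      rw [heq]
      exact lubF_ub (fun w : {w // Suk t i k P S u w} => mkS ht hS hwf w.1) ⟨w, hw⟩
    · intro τ hτ
      rw [heq]
      exact lubF_least _ (fun x => hτ x.1 x.2)

lemma exists_sigDef (ht : GoodTree t i k) (hws : IsWinningStrategy t P S) :
    ∃ s, SigDef t i k P S s :=
  ⟨mkS ht hws.1 (gg_wf hws.1.2.2.1 hws.2), mkS_sigDef ht hws.1 _⟩

end mkS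

/-! ### Monotonicity of signature assignments along a strategy -/

section mono

variable {t : Label} {i k : ℕ} {P : Bool} {S : List ℕ → Prop} {s : List ℕ → ℕ → Ordinal.{u}}

lemma suk_of_child_active {u : List ℕ} {d : ℕ} (hnA : ¬ Active t i k P S u)
    (hAd : Active t i k P S (u ++ [d])) : Suk t i k P S u (u ++ [d]) := by
  refine ⟨hAd, List.prefix_append _ _, ?_⟩
  intro w' hw' h1 h2
  rcases prefix_snoc_iff.1 h2 with rfl | h3
  · rfl
  · have he : w' = u := h3.eq_of_length_le h1.length_le
    exact absurd (by rw [← he]; exact hw') hnA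

lemma suk_child_subset {u : List ℕ} {d : ℕ} (hnA : ¬ Active t i k P S u)
    (hnAd : ¬ Active t i k P S (u ++ [d])) {w : List ℕ}
    (hw : Suk t i k P S (u ++ [d]) w) : Suk t i k P S u w := by
  refine ⟨hw.1, (List.prefix_append u [d]).trans hw.2.1, ?_⟩
  intro w' ha hp1 hp2
  have hne : w' ≠ u := fun he => hnA (by rw [← he]; exact ha)
  have hlen : u.length < w'.length := length_lt_of_prefix_ne hp1 (Ne.symm hne)
  have hpre : u ++ [d] <+: w' :=
    List.prefix_of_prefix_length_le hw.2.1 hp2 (by simpa using hlen)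
  exact hw.2.2 w' ha hpre hp2

lemma sig_mono_step (ht : GoodTree t i k) (hS : IsStrategy t P S)
    (hsd : SigDef t i k P S s) {u : List ℕ} {d : ℕ} (hSud : S (u ++ [d])) :
    sigLe i k P (s (u ++ [d])) (s u) := by
  have hSu : S u := hS.2.2.1 u d hSud
  by_cases hA : Active t i k P S u
  · obtain ⟨-, j, hp, hPL, hcond⟩ := hA
    have hd0 : d = 0 := by
      have h1 : t (u ++ [d]) ≠ none := hS.2.1 _ hSud
      have h2 := (ht.1.2.1 u _ hp d).1 h1
      simpa [Sym.arity] using h2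
    subst hd0
    have hc := hsd.1 u j ⟨hSu, j, hp, hPL, hcond⟩ hp
    refine Or.inl ⟨j, hPL, ?_, ?_⟩
    · rw [(hc j hPL).2.1 rfl, Ordinal.add_one_eq_succ]
      exact Order.lt_succ _
    · intro j' hPL' hlt
      exact ((hc j' hPL').1 hlt).symm
  · by_cases hAd : Active t i k P S (u ++ [d])
    · exact (hsd.2 u hSu hA).1 (u ++ [d]) (suk_of_child_active hA hAd)
    · refine (hsd.2 (u ++ [d]) hSud hAd).2 (s u) ?_
      intro w hw
      exact (hsd.2 u hSu hA).1 w (suk_child_subset hA hAd hw)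

lemma sig_mono (ht : GoodTree t i k) (hS : IsStrategy t P S)
    (hsd : SigDef t i k P S s) :
    ∀ x, S x → ∀ v, v <+: x → sigLe i k P (s x) (s v) := by
  intro x
  induction x using List.reverseRecOn with
  | nil => intro hx v hv; rw [List.prefix_nil.1 hv]; exact sigLe_refl _
  | append_singleton y d ih =>
    intro hx v hv
    rcases prefix_snoc_iff.1 hv with rfl | hv'
    · exact sigLe_refl _
    · exact sigLe_trans (sig_mono_step ht hS hsd hx) (ih (hS.2.2.1 y d hx) v hv')

end mono

/-! ### Existence of the minimum signature -/

lemma exists_isSigOf {t : Label} {i k : ℕ} {P : Bool} (ht : GoodTree t i k)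
    (hwin : ∃ S : List ℕ → Prop, IsWinningStrategy t P S) :
    ∃ σ : ℕ → Ordinal.{u}, IsSigOf t i k P σ := by
  obtain ⟨S, hS⟩ := hwin
  obtain ⟨s, hsd⟩ := exists_sigDef ht hS
  have hne : {σ : ℕ → Ordinal.{u} | ValOf t i k P σ}.Nonempty :=
    ⟨s [], S, s, hS, hsd, fun j _ => rfl⟩
  refine ⟨(sigLt_wf.{u} i k P).min _ hne, (sigLt_wf.{u} i k P).min_mem _ hne, ?_⟩
  intro τ hτ
  have hnlt := (sigLt_wf i k P).not_lt_min {σ : ℕ → Ordinal.{u} | ValOf t i k P σ} hτ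
  rcases sigLe_total (i := i) (k := k) (P := P) ((sigLt_wf.{u} i k P).min _ hne) τ with h | h
  · exact h
  · rcases h with hlt | heq
    · exact absurd hlt hnlt
    · exact Or.inr heq.symm
/-! ### The below-ℓ machinery -/

/-- Active positions with priority at most ℓ. -/
def ActiveB (t : Label) (i k ℓ : ℕ) (P : Bool) (S : List ℕ → Prop) (x : List ℕ) : Prop :=
  Active t i k P S x ∧ ∃ j, t x = some (Sym.pri j) ∧ j ≤ ℓ

/-- Minimal ActiveB descendants. -/
def SukB (t : Label) (i k ℓ : ℕ) (P : Bool) (S : List ℕ → Prop) (u w : List ℕ) : Prop :=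
  ActiveB t i k ℓ P S w ∧ u <+: w ∧
    ∀ w', ActiveB t i k ℓ P S w' → u <+: w' → w' <+: w → w' = w

section belowchar

variable {t : Label} {i k ℓ : ℕ} {P : Bool} {S : List ℕ → Prop} {s : List ℕ → ℕ → Ordinal.{u}}

lemma step_zero (ht : GoodTree t i k) (hS : IsStrategy t P S) {x w : List ℕ} {j : ℕ}
    (hp : t x = some (Sym.pri j)) (hSw : S w) (h1 : x <+: w) (h2 : x ≠ w) :
    x ++ [0] <+: w := by
  obtain ⟨z, hz⟩ := h1
  cases z with
  | nil => exact absurd (by rw [← hz, List.append_nil]) h2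
  | cons d z' =>
    have hpre : x ++ [d] <+: w := ⟨z', by rw [← hz]; simp⟩
    have hSd : S (x ++ [d]) := prefix_closed_of hS.2.2.1 w hSw _ hpre
    have hne : t (x ++ [d]) ≠ none := hS.2.1 _ hSd
    have hd := (ht.1.2.1 x _ hp d).1 hne
    have hd0 : d = 0 := by simpa [Sym.arity] using hd
    rwa [hd0] at hpre

lemma prefix_antisymm {x y : List ℕ} (h1 : x <+: y) (h2 : y <+: x) : x = y :=
  h1.eq_of_length_le h2.length_le

lemma sukB_active_b1 (ht : GoodTree t i k) (hS : IsStrategy t P S) {x : List ℕ} {j : ℕ}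
    (hp : t x = some (Sym.pri j)) (hnB : ¬ ActiveB t i k ℓ P S x)
    (hB0 : ActiveB t i k ℓ P S (x ++ [0])) {w : List ℕ} :
    SukB t i k ℓ P S x w ↔ w = x ++ [0] := by
  constructor
  · rintro ⟨hBw, hxw, hmin⟩
    have hne : x ≠ w := fun he => hnB (he ▸ hBw)
    have h0 : x ++ [0] <+: w := step_zero ht hS hp hBw.1.1 hxw hne
    exact (hmin (x ++ [0]) hB0 (List.prefix_append _ _) h0).symm
  · rintro rfl
    refine ⟨hB0, List.prefix_append _ _, ?_⟩
    intro w' hB' h1 h2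
    rcases prefix_snoc_iff.1 h2 with rfl | h3
    · rfl
    · exact absurd (prefix_antisymm h1 h3 ▸ hB') hnB

lemma sukB_active_b2 (ht : GoodTree t i k) (hS : IsStrategy t P S) {x : List ℕ} {j : ℕ}
    (hp : t x = some (Sym.pri j)) (hnB : ¬ ActiveB t i k ℓ P S x)
    (hnB0 : ¬ ActiveB t i k ℓ P S (x ++ [0])) {w : List ℕ} :
    SukB t i k ℓ P S x w ↔ SukB t i k ℓ P S (x ++ [0]) w := by
  constructor
  · rintro ⟨hBw, hxw, hmin⟩
    have hne : x ≠ w := fun he => hnB (he ▸ hBw)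
    refine ⟨hBw, step_zero ht hS hp hBw.1.1 hxw hne, ?_⟩
    intro w' hB' h1 h2
    exact hmin w' hB' ((List.prefix_append x [0]).trans h1) h2
  · rintro ⟨hBw, hxw, hmin⟩
    refine ⟨hBw, (List.prefix_append x [0]).trans hxw, ?_⟩
    intro w' hB' h1 h2
    have hne : x ≠ w' := fun he => hnB (he ▸ hB')
    exact hmin w' hB' (step_zero ht hS hp hB'.1.1 h1 hne) h2

lemma suk_of_sukB_ab {x w : List ℕ}
    (hs : Suk t i k P S x w) (hB : ActiveB t i k ℓ P S w) : SukB t i k ℓ P S x w := by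
  refine ⟨hB, hs.2.1, ?_⟩
  intro w' hB' h1 h2
  exact hs.2.2 w' hB'.1 h1 h2

lemma sukB_trans_of_suk {x w z : List ℕ}
    (hs : Suk t i k P S x w) (hnB : ¬ ActiveB t i k ℓ P S w)
    (hz : SukB t i k ℓ P S w z) : SukB t i k ℓ P S x z := by
  refine ⟨hz.1, hs.2.1.trans hz.2.1, ?_⟩
  intro y hBy h1 h2
  rcases le_total y.length w.length with hle | hle
  · have hyw : y <+: w := List.prefix_of_prefix_length_le h2 hz.2.1 hle
    have he := hs.2.2 y hBy.1 h1 hyw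
    exact absurd (he ▸ hBy) hnB
  · have hwy : w <+: y := List.prefix_of_prefix_length_le hz.2.1 h2 hle
    exact hz.2.2 y hBy hwy h2

lemma sukB_decomp {x z : List ℕ} (hnA : ¬ Active t i k P S x)
    (hz : SukB t i k ℓ P S x z) :
    ∃ w, Suk t i k P S x w ∧
      (w = z ∨ (¬ ActiveB t i k ℓ P S w ∧ SukB t i k ℓ P S w z)) := by
  classical
  have hQ : ∃ n, ∃ w', w' <+: z ∧ w'.length = n ∧ Active t i k P S w' ∧ x <+: w' :=
    ⟨z.length, z, List.prefix_refl z, rfl, hz.1.1, hz.2.1⟩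
  obtain ⟨w, hwz, hwlen, hwact, hxw⟩ := Nat.find_spec hQ
  have hminlen : ∀ w'', Active t i k P S w'' → x <+: w'' → w'' <+: z →
      Nat.find hQ ≤ w''.length := by
    intro w'' ha hx2 hz2
    by_contra hlt
    exact Nat.find_min hQ (by omega) ⟨w'', hz2, rfl, ha, hx2⟩
  have hsuk : Suk t i k P S x w := by
    refine ⟨hwact, hxw, ?_⟩
    intro w'' ha h1 h2
    have hle := hminlen w'' ha h1 (h2.trans hwz)
    exact h2.eq_of_length_le (by omega)
  refine ⟨w, hsuk, ?_⟩
  by_cases hwz' : w = z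
  · exact Or.inl hwz'
  · have hnB : ¬ ActiveB t i k ℓ P S w := fun hB => hwz' (hz.2.2 w hB hxw hwz)
    refine Or.inr ⟨hnB, hz.1, hwz, ?_⟩
    intro y hBy h1 h2
    exact hz.2.2 y hBy (hxw.trans h1) h2

/-- The key lub lemma: a (full) lex lub of a family bounded below ℓ is bounded below ℓ. -/
lemma lub_below {ι : Type} {f : ι → ℕ → Ordinal.{u}} {b θ : ℕ → Ordinal.{u}}
    (hub : ∀ x, sigLe i k P (f x) b)
    (hleast : ∀ τ, (∀ x, sigLe i k P (f x) τ) → sigLe i k P b τ)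
    (hbd : ∀ x, sigLeBelow i k P ℓ (f x) θ) : sigLeBelow i k P ℓ b θ := by
  classical
  by_contra hcon
  obtain ⟨j₀, hj₀, hl₀, hlt₀, hf₀⟩ := sigLtBelow_of_not_leBelow hcon
  set τ' : ℕ → Ordinal.{u} := fun j => if j < j₀ then b j else if j = j₀ then θ j₀
    else ⨆ x, f x j with hτ'
  have hτ'lt : ∀ j, j < j₀ → τ' j = b j := by
    intro j h
    show (if j < j₀ then b j else if j = j₀ then θ j₀ else ⨆ x, f x j) = b j
    rw [if_pos h]
  have hτ'eq : τ' j₀ = θ j₀ := by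
    show (if j₀ < j₀ then b j₀ else if j₀ = j₀ then θ j₀ else ⨆ x, f x j₀) = θ j₀
    rw [if_neg (lt_irrefl j₀), if_pos rfl]
  have hτ'gt : ∀ j, j₀ < j → τ' j = ⨆ x, f x j := by
    intro j h
    show (if j < j₀ then b j else if j = j₀ then θ j₀ else ⨆ x, f x j) = ⨆ x, f x j
    rw [if_neg (by omega), if_neg (by omega)]
  have hubτ' : ∀ x, sigLe i k P (f x) τ' := by
    intro x
    rcases hub x with ⟨j₁, hj₁, hlt₁, hf₁⟩ | he
    · rcases lt_or_ge j₁ j₀ with h | h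
      · refine Or.inl ⟨j₁, hj₁, ?_, ?_⟩
        · rw [hτ'lt j₁ h]
          exact hlt₁
        · intro j' hj' hlt'
          rw [hτ'lt j' (lt_trans hlt' h)]
          exact hf₁ j' hj' hlt'
      · have hfb : ∀ j', PLosing i k P j' → j' < j₀ → f x j' = b j' :=
          fun j' a hb => hf₁ j' a (lt_of_lt_of_le hb h)
        have hfθ : ∀ j', PLosing i k P j' → j' < j₀ → f x j' = θ j' :=
          fun j' a hb => (hfb j' a hb).trans (hf₀ j' a hb).symm
        have hle0 : f x j₀ ≤ θ j₀ := by
          rcases hbd x with ⟨j₂, hj₂, hl₂, hlt₂, hf₂⟩ | he2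
          · rcases lt_trichotomy j₂ j₀ with hh | hh | hh
            · exact absurd (hfθ j₂ hj₂ hh ▸ hlt₂) (lt_irrefl _)
            · exact le_of_lt (hh ▸ hlt₂)
            · exact le_of_eq (hf₂ j₀ hj₀ hh)
          · exact le_of_eq (he2 j₀ hj₀ hl₀)
        rcases lt_or_eq_of_le hle0 with hlt0 | heq0
        · refine Or.inl ⟨j₀, hj₀, ?_, ?_⟩
          · rw [hτ'eq]
            exact hlt0
          · intro j' hj' hlt'
            rw [hτ'lt j' hlt']
            exact hfb j' hj' hlt'
        · rcases firstDiff i k P (f x) τ' with he | ⟨j₃, hj₃, hne₃, hf₃⟩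
          · exact Or.inr he
          · rcases lt_trichotomy j₃ j₀ with hh | hh | hh
            · refine absurd (show f x j₃ = τ' j₃ from ?_) hne₃
              rw [hτ'lt j₃ hh]
              exact hfb j₃ hj₃ hh
            · subst hh
              refine absurd (show f x j₃ = τ' j₃ from ?_) hne₃
              rw [hτ'eq]
              exact heq0
            · refine Or.inl ⟨j₃, hj₃, lt_of_le_of_ne ?_ hne₃, hf₃⟩
              rw [hτ'gt j₃ hh]
              exact Ordinal.le_iSup (fun y => f y j₃) x
    · exfalso
      refine not_ltBelow_and_leBelow (σ := f x) (θ := θ) ⟨j₀, hj₀, hl₀, ?_, ?_⟩ (hbd x)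
      · rw [he j₀ hj₀]
        exact hlt₀
      · intro j' hj' hlt'
        exact (hf₀ j' hj' hlt').trans (he j' hj').symm
  have hble := hleast τ' hubτ'
  rcases hble with ⟨j₄, hj₄, hlt₄, hf₄⟩ | he
  · rcases lt_trichotomy j₄ j₀ with hh | hh | hh
    · rw [hτ'lt j₄ hh] at hlt₄
      exact absurd hlt₄ (lt_irrefl _)
    · subst hh
      rw [hτ'eq] at hlt₄
      exact absurd (hlt₀.trans hlt₄) (lt_irrefl _)
    · have hbe := hf₄ j₀ hj₀ hh
      rw [hτ'eq] at hbe
      exact absurd (hbe ▸ hlt₀) (lt_irrefl _)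
  · have hbe := he j₀ hj₀
    rw [hτ'eq] at hbe
    exact absurd (hbe ▸ hlt₀) (lt_irrefl _)

lemma eqBelow_child_of_active (hsd : SigDef t i k P S s) {x : List ℕ} {j : ℕ}
    (hA : Active t i k P S x) (hp : t x = some (Sym.pri j)) (hj : ℓ < j) :
    sigEqBelow i k P ℓ (s x) (s (x ++ [0])) := by
  intro j' hj' hjl
  exact (hsd.1 x j hA hp j' hj').1 (by omega)

lemma not_activeB_big {x : List ℕ} {j : ℕ} (hA : Active t i k P S x)
    (hp : t x = some (Sym.pri j)) (hnB : ¬ ActiveB t i k ℓ P S x) : ℓ < j := by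
  by_contra h
  exact hnB ⟨hA, j, hp, by omega⟩

/-- The below-ℓ characterization: at non-ActiveB positions the below-ℓ prefix of the
signature is the below-lub of the prefixes at minimal ActiveB descendants. -/
lemma below_char (ht : GoodTree t i k) (hS : IsStrategy t P S)
    (hsd : SigDef t i k P S s)
    (hwf : WellFounded (fun x u => Gg t i k P S u x)) :
    ∀ x, S x → ¬ ActiveB t i k ℓ P S x →
      (∀ w, SukB t i k ℓ P S x w → sigLeBelow i k P ℓ (s w) (s x)) ∧
      (∀ τ, (∀ w, SukB t i k ℓ P S x w → sigLeBelow i k P ℓ (s w) τ) →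
        sigLeBelow i k P ℓ (s x) τ) := by
  intro x
  induction x using hwf.induction with
  | _ x IH =>
  intro hSx hnB
  by_cases hA : Active t i k P S x
  · -- active with priority > ℓ
    obtain ⟨-, j, hp, hPL, hcond⟩ := hA
    have hA' : Active t i k P S x := ⟨hSx, j, hp, hPL, hcond⟩
    have hj : ℓ < j := not_activeB_big hA' hp hnB
    have heq : sigEqBelow i k P ℓ (s x) (s (x ++ [0])) :=
      eqBelow_child_of_active hsd hA' hp hj
    have hS0 : S (x ++ [0]) := child_of_active ht hS hSx hp
    by_cases hB0 : ActiveB t i k ℓ P S (x ++ [0])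
    · constructor
      · intro w hw
        rw [(sukB_active_b1 ht hS hp hnB hB0).1 hw]
        exact sigLeBelow_of_eqBelow heq.symm'
      · intro τ hτ
        exact sigLeBelow_trans (sigLeBelow_of_eqBelow heq)
          (hτ (x ++ [0]) ((sukB_active_b1 ht hS hp hnB hB0).2 rfl))
    · have IH0 := IH (x ++ [0]) (gg_child ht hS hA') hS0 hB0
      constructor
      · intro w hw
        exact sigLeBelow_trans (IH0.1 w ((sukB_active_b2 ht hS hp hnB hB0).1 hw))
          (sigLeBelow_of_eqBelow heq.symm')
      · intro τ hτ
        refine sigLeBelow_trans (sigLeBelow_of_eqBelow heq) (IH0.2 τ ?_)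
        intro w hw
        exact hτ w ((sukB_active_b2 ht hS hp hnB hB0).2 hw)
  · -- not active: use the full Suk characterization
    have hchar := hsd.2 x hSx hA
    constructor
    · intro z hz
      obtain ⟨w, hsuk, hcase⟩ := sukB_decomp hA hz
      rcases hcase with rfl | ⟨hnBw, hwz⟩
      · exact sigLeBelow_of_sigLe (hchar.1 w hsuk)
      · have IHw := IH w (gg_suk hSx hA hsuk) hsuk.1.1 hnBw
        exact sigLeBelow_trans (IHw.1 z hwz) (sigLeBelow_of_sigLe (hchar.1 w hsuk))
    · intro τ hτ
      refine lub_below (ι := {w // Suk t i k P S x w})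
        (f := fun w => s w.1) (fun w => hchar.1 w.1 w.2)
        (fun τ' h' => hchar.2 τ' (fun w hw => h' ⟨w, hw⟩)) ?_
      rintro ⟨w, hw⟩
      by_cases hBw : ActiveB t i k ℓ P S w
      · exact hτ w (suk_of_sukB_ab hw hBw)
      · have IHw := IH w (gg_suk hSx hA hw) hw.1.1 hBw
        exact IHw.2 τ (fun z hz => hτ z (sukB_trans_of_suk hw hBw hz))

end belowchar
lemma sigEqBelow_of_le_le {i k ℓ : ℕ} {P : Bool} {σ τ : ℕ → Ordinal.{u}}
    (h1 : sigLeBelow i k P ℓ σ τ) (h2 : sigLeBelow i k P ℓ τ σ) : sigEqBelow i k P ℓ σ τ := by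
  rcases h1 with hlt | he
  · exact (not_ltBelow_and_leBelow hlt h2).elim
  · exact he
set_option maxHeartbeats 1000000


/-- Suboptimal-extension bound on signatures: if `t` is won by `P`, `ℓ` is a
`P`-losing number, and `Σ` is a partial strategy of `P` in `G(t)` that (a)
never reaches a priority `≤ ℓ` nor a `~`, (b) has all infinite plays winning
for `P`, and (c) at every unreachable position `u` satisfies
`σ_P(t↾u)↾ℓ ≤_lex (θ_{i'},…,θ_ℓ)`, then `σ_P(t)↾ℓ ≤_lex (θ_{i'},…,θ_ℓ)`. -/
theorem sig_bound_via_partial_strategy (i k : ℕ) (P : Bool) (t : Label)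
    (ℓ : ℕ) (θ : ℕ → Ordinal) (S : List ℕ → Prop)
    (ht : GoodTree t i k)
    (hwin : ∃ S' : List ℕ → Prop, IsWinningStrategy t P S')
    (hℓ : PLosing i k P ℓ)
    (hps : IsPartialStrategy t P S)
    (hpri : ∀ u j, S u → t u = some (Sym.pri j) → ℓ < j)
    (hneg : ∀ u, S u → t u ≠ some Sym.neg)
    (hplays : ∀ α, IsPlayOf S α → WinsBranch t P α)
    (hunreach : ∀ (u : List ℕ) (a : Option (ℕ → Ordinal)),
      NotReachable t P S u → IsExtSigOf (subtree t u) i k P a →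
      extLeBelow i k P ℓ a (some θ)) :
    ∀ a : Option (ℕ → Ordinal), IsExtSigOf t i k P a →
      extLeBelow i k P ℓ a (some θ) := by
  classical
  intro a hsig
  cases a with
  | none =>
    have hns : ¬ ∃ S' : List ℕ → Prop, IsWinningStrategy t P S' := hsig
    exact absurd hwin hns
  | some σ =>
  have hsig' : IsSigOf t i k P σ := hsig
  show sigLeBelow i k P ℓ σ θ
  have hSclosed : ∀ u (d : ℕ), S (u ++ [d]) → S u := hps.2.2.1
  have hSpc := prefix_closed_of hSclosed
  set NR := NotReachable t P S with hNRdef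
  -- every unreachable subtree is won by P, with value bounded below ℓ
  have hNRfact : ∀ u, NR u →
      ∃ (T : List ℕ → Prop) (s₀ : List ℕ → ℕ → Ordinal),
        IsWinningStrategy (subtree t u) P T ∧ SigDef (subtree t u) i k P T s₀ ∧
        sigLeBelow i k P ℓ (s₀ []) θ := by
    intro u hu
    have htu : t u ≠ none := hu.choose_spec.choose_spec.2.2.2.1
    have hgood : GoodTree (subtree t u) i k := subtree_goodTree ht htu
    have hwon : ∃ T : List ℕ → Prop, IsWinningStrategy (subtree t u) P T := by
      by_contra hno
      exact hunreach u none hu hno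
    obtain ⟨σu, hσu⟩ := exists_isSigOf hgood hwon
    have hb : sigLeBelow i k P ℓ σu θ := hunreach u (some σu) hu hσu
    obtain ⟨T, s₀, hT, hsd₀, heq₀⟩ := hσu.1
    exact ⟨T, s₀, hT, hsd₀,
      sigLeBelow_trans (sigLeBelow_of_eqBelow (sigEqBelow_of_sigEq heq₀).symm') hb⟩
  choose T s₀ hTwin hTsd hTbd using hNRfact
  have hNRne : ∀ u, NR u → t u ≠ none := fun u hu =>
    hu.choose_spec.choose_spec.2.2.2.1
  have hNRnotS : ∀ u, NR u → ¬ S u := fun u hu =>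
    hu.choose_spec.choose_spec.2.2.1
  set SS : List ℕ → Prop :=
    fun x => S x ∨ ∃ u, ∃ h : NR u, ∃ v, x = u ++ v ∧ T u h v with hSSdef
  have hTstrat : ∀ u (h : NR u), IsStrategy (subtree t u) P (T u h) :=
    fun u h => (hTwin u h).1
  have hNRpre : ∀ u u', NR u → NR u' → u <+: u' → u = u' := by
    intro u u' h1 h2 hpre
    by_contra hne
    obtain ⟨w, d, rfl, hw, -, -, -⟩ := h2
    rcases prefix_snoc_iff.1 hpre with he | hpw
    · exact hne he
    · exact hNRnotS u h1 (hSpc w hw u hpw)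
  have hNRuniq : ∀ u u' x, NR u → NR u' → u <+: x → u' <+: x → u = u' := by
    intro u u' x h1 h2 hp1 hp2
    rcases le_total u.length u'.length with hle | hle
    · exact hNRpre u u' h1 h2 (List.prefix_of_prefix_length_le hp1 hp2 hle)
    · exact (hNRpre u' u h2 h1 (List.prefix_of_prefix_length_le hp2 hp1 hle)).symm
  have hmemgraft : ∀ u (h : NR u) v, SS (u ++ v) → T u h v := by
    intro u h v hx
    rcases hx with hS' | ⟨u', h', v', heq', hv'⟩
    · exact absurd (hSpc _ hS' u (List.prefix_append u v)) (hNRnotS u h)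
    · have huu : u = u' := hNRuniq u u' (u ++ v) h h' (List.prefix_append u v)
        (by rw [heq']; exact List.prefix_append u' v')
      subst huu
      have : v = v' := List.append_cancel_left heq'
      subst this
      exact hv'
  have hsplit : ∀ (u v w : List ℕ), w <+: u ++ v → w <+: u ∨ ∃ y, w = u ++ y ∧ y <+: v := by
    intro u v w hw
    rcases le_total w.length u.length with hle | hle
    · exact Or.inl (List.prefix_of_prefix_length_le hw (List.prefix_append u v) hle)
    · have hu : u <+: w := List.prefix_of_prefix_length_le (List.prefix_append u v) hw hle
      obtain ⟨y, hy⟩ := hu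
      refine Or.inr ⟨y, hy.symm, ?_⟩
      refine (List.prefix_append_right_inj u).1 ?_
      rw [hy]
      exact hw
  have hancS : ∀ u, NR u → ∀ w, w <+: u → w ≠ u → S w := by
    intro u hu w hw hne
    obtain ⟨w₀, d₀, rfl, hw₀, -, -, -⟩ := hu
    rcases prefix_snoc_iff.1 hw with rfl | h2
    · exact absurd rfl hne
    · exact hSpc w₀ hw₀ w h2
  have hancneg : ∀ u, NR u → ∀ m, m < u.length → t (u.take m) ≠ some Sym.neg := by
    intro u hu m hm
    refine hneg _ (hancS u hu _ (List.take_prefix m u) ?_)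
    intro he
    have h1 := congrArg List.length he
    rw [List.length_take] at h1
    omega
  -- SS is a strategy
  have hSSstrat : IsStrategy t P SS := by
    refine ⟨Or.inl hps.1, ?_, ?_, ?_, ?_⟩
    · rintro x (hx | ⟨u, h, v, rfl, hv⟩)
      · exact hps.2.1 x hx
      · exact (hTstrat u h).2.1 v hv
    · rintro x d (hx | ⟨u, h, v, he, hv⟩)
      · exact Or.inl (hSclosed x d hx)
      · rcases List.eq_nil_or_concat v with rfl | ⟨v', d', rfl⟩
        · obtain ⟨w₀, d₀, he₀, hw₀, -, -, -⟩ := h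
          rw [List.append_nil] at he
          rw [he₀] at he
          obtain ⟨h1, -⟩ := List.append_inj' he rfl
          exact Or.inl (by rw [h1]; exact hw₀)
        · rw [List.concat_eq_append] at hv
          rw [List.concat_eq_append, ← List.append_assoc] at he
          obtain ⟨h1, -⟩ := List.append_inj' he rfl
          subst h1
          exact Or.inr ⟨u, h, v', rfl, (hTstrat u h).2.2.1 v' d' hv⟩
    · rintro x (hx | ⟨u, h, v, rfl, hv⟩) hcx
      · obtain ⟨d, hd, hdu⟩ := hps.2.2.2.1 x hx hcx
        refine ⟨d, Or.inl hd, ?_⟩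
        rintro d' (hd' | ⟨u', h', v', he', hv'⟩)
        · exact hdu d' hd'
        · exfalso
          have hpre' : u' <+: x ++ [d'] := ⟨v', he'.symm⟩
          rcases prefix_snoc_iff.1 hpre' with he2 | h2
          · obtain ⟨w', e', he₀, hw', -, -, hc'⟩ := h'
            rw [he₀] at he2
            obtain ⟨h3, -⟩ := List.append_inj' he2.symm rfl
            rw [← h3] at hc'
            rw [hcx] at hc'
            have : P = !P := by injection hc'
            simp at this
          · exact hNRnotS u' h' (hSpc x hx u' h2)
      · have hcsub : ctrl (subtree t u) v = some P := by
          rw [← ctrl_append (hancneg u h)]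
          exact hcx
        obtain ⟨d, hd, hdu⟩ := (hTstrat u h).2.2.2.1 v hv hcsub
        refine ⟨d, Or.inr ⟨u, h, v ++ [d], by rw [List.append_assoc], hd⟩, ?_⟩
        intro d' hd'
        refine hdu d' (hmemgraft u h (v ++ [d']) ?_)
        rw [← List.append_assoc]
        exact hd'
    · rintro x d (hx | ⟨u, h, v, rfl, hv⟩) hcx htd
      · by_cases hSd : S (x ++ [d])
        · exact Or.inl hSd
        · have htx : t x ≠ none := hps.2.1 x hx
          rcases h' : t x with _ | sx
          · exact absurd h' htx
          cases sx with
          | neg => exact absurd h' (hneg x hx)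
          | pri j =>
            exfalso
            have hd0 : d = 0 := by
              have h2 := (ht.1.2.1 x _ h' d).1 htd
              simpa [Sym.arity] using h2
            obtain ⟨d'', hd''⟩ := hps.2.2.2.2 x hx
            have hd''0 : d'' = 0 := by
              have h1 := hps.2.1 _ hd''
              have h2 := (ht.1.2.1 x _ h' d'').1 h1
              simpa [Sym.arity] using h2
            rw [hd''0] at hd''
            rw [hd0] at hSd
            exact hSd hd''
          | choice Q =>
            have hcval : ctrl t x = some (if kept t x then Q else !Q) := by
              unfold ctrl
              rw [h']
            have hcP : ctrl t x = some (!P) := by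
              have hbne : (if kept t x then Q else !Q) ≠ P := by
                intro hh
                rw [hcval, hh] at hcx
                exact hcx rfl
              rw [hcval]
              exact congrArg some (Bool.eq_not_iff.2 hbne)
            have hNRd : NR (x ++ [d]) := ⟨x, d, rfl, hx, hSd, htd, hcP⟩
            exact Or.inr ⟨x ++ [d], hNRd, [], (List.append_nil _).symm, (hTstrat _ hNRd).1⟩
      · have hcsub : ctrl (subtree t u) v ≠ some P := by
          rw [← ctrl_append (hancneg u h)]
          exact hcx
        have htsub : subtree t u (v ++ [d]) ≠ none := by
          show t (u ++ (v ++ [d])) ≠ none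
          rw [← List.append_assoc]
          exact htd
        exact Or.inr ⟨u, h, v ++ [d], by rw [List.append_assoc],
          (hTstrat u h).2.2.2.2 v d hv hcsub htsub⟩
  -- all infinite plays of SS are winning
  have hSSwin : ∀ α, IsPlayOf SS α → WinsBranch t P α := by
    intro α hα
    by_cases hall : ∀ n, S (pref α n)
    · exact hplays α hall
    · push_neg at hall
      have hex : ∃ n, ¬ S (pref α n) := hall
      have hnot : ¬ S (pref α (Nat.find hex)) := Nat.find_spec hex
      set n₀ := Nat.find hex with hn₀def
      have hprev : ∀ m, m < n₀ → S (pref α m) := fun m hm => not_not.1 (Nat.find_min hex hm)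
      rcases hα n₀ with hS' | ⟨u, h, v, he, hv⟩
      · exact absurd hS' hnot
      have hveq : v = [] := by
        by_contra hvne
        have hlen : u.length < n₀ := by
          have h1 := congrArg List.length he
          rw [pref_length, List.length_append] at h1
          have hv1 : 0 < v.length := List.length_pos_iff.2 hvne
          omega
        have hupre : u <+: pref α n₀ := by rw [he]; exact List.prefix_append u v
        have hu2 : u = pref α u.length := by
          have h3 := List.prefix_iff_eq_take.1 hupre
          rw [pref_take α (le_of_lt hlen)] at h3
          exact h3
        exact hNRnotS u h (by rw [hu2]; exact hprev u.length hlen)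
      subst hveq
      rw [List.append_nil] at he
      set β : ℕ → ℕ := fun m => α (n₀ + m) with hβdef
      have hpref_eq : ∀ m, pref α (n₀ + m) = u ++ pref β m := by
        intro m
        rw [pref_add, ← he]
      have hplayβ : IsPlayOf (T u h) β := by
        intro m
        refine hmemgraft u h (pref β m) ?_
        rw [← hpref_eq m]
        exact hα (n₀ + m)
      have hwinβ := (hTwin u h).2 β hplayβ
      have heffeq : ∀ m, effPri t (pref α (n₀ + m)) = effPri (subtree t u) (pref β m) := by
        intro m
        rw [hpref_eq m]
        exact effPri_append (hancneg u h)
      have hio : ∀ j, InfOften t α j ↔ InfOften (subtree t u) β j := by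
        intro j
        constructor
        · intro hinf
          have h1 : ({n | effPri t (pref α n) = some j} \ {n | n < n₀}).Infinite :=
            hinf.diff (Set.finite_lt_nat n₀)
          have h2 : (fun n => n - n₀) '' ({n | effPri t (pref α n) = some j} \ {n | n < n₀}) ⊆
              {m | effPri (subtree t u) (pref β m) = some j} := by
            rintro m ⟨n, ⟨hn1, hn2⟩, rfl⟩
            simp only [Set.mem_setOf_eq, not_lt] at hn1 hn2 ⊢
            have h3 : n = n₀ + (n - n₀) := by omega
            rw [← heffeq (n - n₀), ← h3]
            exact hn1
          refine Set.Infinite.mono h2 (h1.image ?_)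
          intro a ha b hb hab
          simp only [Set.mem_diff, Set.mem_setOf_eq, not_lt] at ha hb
          have hab' : a - n₀ = b - n₀ := hab
          omega
        · intro hinf
          have h2 : (fun m => n₀ + m) '' {m | effPri (subtree t u) (pref β m) = some j} ⊆
              {n | effPri t (pref α n) = some j} := by
            rintro n ⟨m, hm, rfl⟩
            simp only [Set.mem_setOf_eq] at hm ⊢
            rw [heffeq m]
            exact hm
          refine Set.Infinite.mono h2 (hinf.image (fun a _ b _ hab => ?_))
          have hab' : n₀ + a = n₀ + b := hab
          omega
      obtain ⟨j, h1, h2, h3⟩ := hwinβ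
      exact ⟨j, (hio j).2 h1, fun j' hj' hinf' => h2 j' hj' ((hio j').1 hinf'), h3⟩
  -- signature assignment for SS
  have hSSwf := gg_wf (t := t) (i := i) (k := k) (P := P) hSSstrat.2.2.1 hSSwin
  set s' := mkS ht hSSstrat hSSwf with hs'def
  have hsd' : SigDef t i k P SS s' := mkS_sigDef ht hSSstrat hSSwf
  -- Active correspondence
  have hAfwd : ∀ u (h : NR u) v, Active t i k P SS (u ++ v) →
      Active (subtree t u) i k P (T u h) v := by
    intro u h v hA
    obtain ⟨hmem', j, hp, hPL, hcond⟩ := hA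
    refine ⟨hmemgraft u h v hmem', j, hp, hPL, ?_⟩
    intro y hy hyne
    exact hcond (u ++ y) ((List.prefix_append_right_inj u).2 hy)
      (fun hc => hyne (List.append_cancel_left hc))
  have hAbwd : ∀ u (h : NR u) v j, j ≤ ℓ → subtree t u v = some (Sym.pri j) →
      Active (subtree t u) i k P (T u h) v → Active t i k P SS (u ++ v) := by
    intro u h v j hjl hp hA
    obtain ⟨hTv, j', hp', hPL', hcond⟩ := hA
    have hjj : j' = j := by
      have h2 : some (Sym.pri j') = some (Sym.pri j) := hp'.symm.trans hp
      simpa using h2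
    subst hjj
    refine ⟨Or.inr ⟨u, h, v, rfl, hTv⟩, j', hp', hPL', ?_⟩
    intro w hw hwne
    rcases hsplit u v w hw with hwu | ⟨y, rfl, hyv⟩
    · by_cases hweq : w = u
      · subst hweq
        have hvne : v ≠ [] := by
          rintro rfl
          rw [List.append_nil] at hwne
          exact hwne rfl
        have hroot := hcond [] (List.nil_prefix) (fun hc => hvne hc.symm)
        have hr2 : subtree t w [] = t w := by
          show t (w ++ []) = t w
          rw [List.append_nil]
        rw [hr2] at hroot
        exact hroot
      · have hSw : S w := hancS u h w hwu hweq
        constructor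
        · exact hneg w hSw
        · intro j'' hj''
          have := hpri w j'' hSw hj''
          omega
    · have hyne : y ≠ v := fun hc => hwne (by rw [hc])
      exact hcond y hyv hyne
  have hABfwd : ∀ u (h : NR u) v, ActiveB t i k ℓ P SS (u ++ v) →
      ActiveB (subtree t u) i k ℓ P (T u h) v :=
    fun u h v hb => ⟨hAfwd u h v hb.1, hb.2⟩
  have hABbwd : ∀ u (h : NR u) v, ActiveB (subtree t u) i k ℓ P (T u h) v →
      ActiveB t i k ℓ P SS (u ++ v) := by
    rintro u h v ⟨hA, j, hp, hjl⟩
    exact ⟨hAbwd u h v j hjl hp hA, j, hp, hjl⟩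
  -- SukB correspondence
  have hSukBfwd : ∀ u (h : NR u) v w, T u h v → SukB t i k ℓ P SS (u ++ v) w →
      ∃ y, w = u ++ y ∧ SukB (subtree t u) i k ℓ P (T u h) v y := by
    intro u h v w hTv hw
    obtain ⟨hBw, hpre, hmin'⟩ := hw
    obtain ⟨y, hy⟩ := (List.prefix_append u v).trans hpre
    subst hy
    refine ⟨y, rfl, hABfwd u h y hBw, (List.prefix_append_right_inj u).1 hpre, ?_⟩
    intro z hBz h1 h2
    have := hmin' (u ++ z) (hABbwd u h z hBz)
      ((List.prefix_append_right_inj u).2 h1) ((List.prefix_append_right_inj u).2 h2)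
    exact List.append_cancel_left this
  have hSukBbwd : ∀ u (h : NR u) v y, SukB (subtree t u) i k ℓ P (T u h) v y →
      SukB t i k ℓ P SS (u ++ v) (u ++ y) := by
    intro u h v y hy
    refine ⟨hABbwd u h y hy.1, (List.prefix_append_right_inj u).2 hy.2.1, ?_⟩
    intro w' hB' h1 h2
    obtain ⟨z, hz⟩ := (List.prefix_append u v).trans h1
    subst hz
    have := hy.2.2 z (hABfwd u h z hB')
      ((List.prefix_append_right_inj u).1 h1) ((List.prefix_append_right_inj u).1 h2)
    rw [this]
  -- the below characterizations
  have hbcSS := below_char (ℓ := ℓ) ht hSSstrat hsd' hSSwf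
  have hbcT : ∀ u (h : NR u), ∀ x, T u h x → ¬ ActiveB (subtree t u) i k ℓ P (T u h) x →
      (∀ w, SukB (subtree t u) i k ℓ P (T u h) x w →
        sigLeBelow i k P ℓ (s₀ u h w) (s₀ u h x)) ∧
      (∀ τ, (∀ w, SukB (subtree t u) i k ℓ P (T u h) x w →
        sigLeBelow i k P ℓ (s₀ u h w) τ) → sigLeBelow i k P ℓ (s₀ u h x) τ) :=
    fun u h => below_char (ℓ := ℓ) (subtree_goodTree ht (hNRne u h)) (hTstrat u h)
      (hTsd u h) (gg_wf (hTstrat u h).2.2.1 (hTwin u h).2)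
  -- comparison inside grafts
  have hCMP : ∀ u (h : NR u) v, T u h v →
      sigEqBelow i k P ℓ (s' (u ++ v)) (s₀ u h v) := by
    intro u h
    have hgood : GoodTree (subtree t u) i k := subtree_goodTree ht (hNRne u h)
    have hwfT := gg_wf (t := subtree t u) (i := i) (k := k) (P := P)
      (hTstrat u h).2.2.1 (hTwin u h).2
    intro v
    induction v using hwfT.induction with
    | _ v IH =>
    intro hTv
    by_cases hB : ActiveB (subtree t u) i k ℓ P (T u h) v
    · obtain ⟨hAv, j, hp, hjl⟩ := hB
      have hAt : Active t i k P SS (u ++ v) := hAbwd u h v j hjl hp hAv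
      have hpt : t (u ++ v) = some (Sym.pri j) := hp
      have hchild : T u h (v ++ [0]) := child_of_active hgood (hTstrat u h) hTv hp
      have hIH := IH (v ++ [0]) (gg_child hgood (hTstrat u h) hAv) hchild
      intro j' hj' hjl'
      have hcs := (hTsd u h).1 v j hAv hp j' hj'
      have hct := hsd'.1 (u ++ v) j hAt hpt j' hj'
      have hassoc : (u ++ v) ++ [0] = u ++ (v ++ [0]) := List.append_assoc u v [0]
      rcases lt_trichotomy j' j with hh | hh | hh
      · rw [hct.1 hh, hcs.1 hh, hassoc]
        exact hIH j' hj' hjl'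
      · subst hh
        rw [hct.2.1 rfl, hcs.2.1 rfl, hassoc]
        rw [hIH j' hj' hjl']
      · rw [hct.2.2 hh, hcs.2.2 hh]
    · have hBt : ¬ ActiveB t i k ℓ P SS (u ++ v) := fun hb => hB (hABfwd u h v hb)
      have hc1 := hbcSS (u ++ v) (Or.inr ⟨u, h, v, rfl, hTv⟩) hBt
      have hc2 := hbcT u h v hTv hB
      have hstep : ∀ y, SukB (subtree t u) i k ℓ P (T u h) v y →
          Gg (subtree t u) i k P (T u h) v y := by
        intro y hy
        refine ⟨hTv, hy.1.1.1, hy.2.1, ?_, y, hy.1.1, hy.2.1, List.prefix_refl y⟩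
        rintro rfl
        exact hB hy.1
      have hle1 : sigLeBelow i k P ℓ (s' (u ++ v)) (s₀ u h v) := by
        refine hc1.2 _ ?_
        intro w hw
        obtain ⟨y, rfl, hy⟩ := hSukBfwd u h v w hTv hw
        exact sigLeBelow_trans
          (sigLeBelow_of_eqBelow (IH y (hstep y hy) hy.1.1.1))
          (hc2.1 y hy)
      have hle2 : sigLeBelow i k P ℓ (s₀ u h v) (s' (u ++ v)) := by
        refine hc2.2 _ ?_
        intro y hy
        exact sigLeBelow_trans
          (sigLeBelow_of_eqBelow (IH y (hstep y hy) hy.1.1.1).symm')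
          (hc1.1 (u ++ y) (hSukBbwd u h v y hy))
      exact sigEqBelow_of_le_le hle1 hle2
  -- the bound on the original part
  have hclaimC : ∀ x, S x → sigLeBelow i k P ℓ (s' x) θ := by
    intro x
    induction x using hSSwf.induction with
    | _ x IH =>
    intro hx
    by_cases hA : Active t i k P SS x
    · obtain ⟨-, j, hp, hPL, hcond⟩ := hA
      have hA' : Active t i k P SS x := ⟨Or.inl hx, j, hp, hPL, hcond⟩
      have hj : ℓ < j := hpri x j hx hp
      have heq := eqBelow_child_of_active hsd' hA' hp hj
      have hS0 : S (x ++ [0]) := by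
        obtain ⟨d, hd⟩ := hps.2.2.2.2 x hx
        have hd0 : d = 0 := by
          have h1 := hps.2.1 _ hd
          have h2 := (ht.1.2.1 x _ hp d).1 h1
          simpa [Sym.arity] using h2
        rwa [hd0] at hd
      exact sigLeBelow_trans (sigLeBelow_of_eqBelow heq)
        (IH (x ++ [0]) (gg_child ht hSSstrat hA') hS0)
    · have hchar := hsd'.2 x (Or.inl hx) hA
      refine lub_below (ι := {w // Suk t i k P SS x w}) (f := fun w => s' w.1)
        (fun w => hchar.1 w.1 w.2) (fun τ' h' => hchar.2 τ' (fun w hw => h' ⟨w, hw⟩)) ?_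
      rintro ⟨w, hw⟩
      rcases hw.1.1 with hSw | ⟨u, h, v, rfl, hv⟩
      · exact IH w (gg_suk (Or.inl hx) hA hw) hSw
      · have h1 := hCMP u h v hv
        have h2 : sigLe i k P (s₀ u h v) (s₀ u h []) :=
          sig_mono (subtree_goodTree ht (hNRne u h)) (hTstrat u h) (hTsd u h) v hv []
            (List.nil_prefix)
        exact sigLeBelow_trans (sigLeBelow_of_eqBelow h1)
          (sigLeBelow_trans (sigLeBelow_of_sigLe h2) (hTbd u h))
  -- conclusion
  have hval : ValOf t i k P (s' []) := ⟨SS, s', ⟨hSSstrat, hSSwin⟩, hsd', fun j _ => rfl⟩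
  have hσle := hsig'.2 (s' []) hval
  exact sigLeBelow_trans (sigLeBelow_of_sigLe hσle) (hclaimC [] hps.1)

end UnambSig
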